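/- arXiv:2312.13613 — 7 statements merged into one kernel-verified Lean document; each statement's English description precedes it below -/
import Mathlib

section
/- For every positive integer n, the sum ∑_{k=0}^{n-1} (8k+9)·W_k² is congruent to n modulo 2n. -/
open Finset

/-- The integer value of C(2k,k)/(2k-1): equals -1 at k = 0 and 2*Catalan(k-1) for k >= 1. -/
def c (k : ℕ) : ℤ := if k = 0 then -1 else 2 * (catalan (k - 1) : ℤ)

/-- W n = ∑_{k=0}^{⌊n/2⌋} C(n,2k) * C(2k,k)/(2k-1). -/
def W (n : ℕ) : ℤ := ∑ k ∈ Finset.range (n / 2 + 1), (n.choose (2 * k) : ℤ) * c k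

/-- The n-th central trinomial coefficient T n = ∑_{l=0}^{⌊n/2⌋} C(n,2l) * C(2l,l). -/
def T (n : ℕ) : ℤ := ∑ l ∈ Finset.range (n / 2 + 1), (n.choose (2 * l) : ℤ) * ((2 * l).choose l : ℤ)

instance fact_prime_3 : Fact (Nat.Prime 3) := ⟨by norm_num⟩

/-! ### Auxiliary definitions -/

/-- Central binomial coefficient as an integer. -/
def Bc (k : ℕ) : ℤ := ((2 * k).choose k : ℤ)

/-- Partial sums of `(8k+9) W k ^ 2`. -/
def Ssum (n : ℕ) : ℤ := ∑ k ∈ Finset.range n, (8 * (k : ℤ) + 9) * (W k) ^ 2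

/-- Telescoping certificate for the trinomial recurrence. -/
def gfun (n l : ℕ) : ℤ := 2 * (l : ℤ) * ((n + 1).choose (2 * l - 1) : ℤ) * Bc l

/-! ### Basic binomial identities over ℤ -/

lemma absorb_z (n k : ℕ) :
    ((n : ℤ) + 1 - (k : ℤ)) * (((n + 1).choose k : ℕ) : ℤ)
      = ((n : ℤ) + 1) * ((n.choose k : ℕ) : ℤ) := by
  rcases le_or_gt k (n + 1) with h | h
  · have h2 := Nat.choose_mul_succ_eq n k
    zify [h] at h2
    linarith
  · have h1 : n.choose k = 0 := Nat.choose_eq_zero_of_lt (by omega)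
    have h2 : (n + 1).choose k = 0 := Nat.choose_eq_zero_of_lt (by omega)
    simp [h1, h2]

lemma succ_mul_choose_z (n k m : ℕ) (hm : m = k + 1) :
    ((k : ℤ) + 1) * (((n + 1).choose m : ℕ) : ℤ)
      = ((n : ℤ) + 1) * ((n.choose k : ℕ) : ℤ) := by
  subst hm
  have h := Nat.add_one_mul_choose_eq n k
  zify at h
  linarith

lemma pascal_z (m a b n : ℕ) (hm : m = n + 1) (hb : b = a + 1) :
    ((m.choose b : ℕ) : ℤ) = ((n.choose a : ℕ) : ℤ) + ((n.choose b : ℕ) : ℤ) := by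
  subst hm; subst hb
  exact_mod_cast Nat.choose_succ_succ n a

/-! ### Relations for `c` and `Bc` -/

lemma cB (k : ℕ) : (2 * (k : ℤ) - 1) * c k = Bc k := by
  cases k with
  | zero => simp [c, Bc]
  | succ j =>
    have h1 : ((j : ℤ) + 1) * (catalan j : ℤ) = (j.centralBinom : ℤ) := by
      exact_mod_cast congrArg (Nat.cast : ℕ → ℤ) (succ_mul_catalan_eq_centralBinom j)
    have h2 : ((j : ℤ) + 1) * ((j + 1).centralBinom : ℤ)
        = 2 * (2 * (j : ℤ) + 1) * (j.centralBinom : ℤ) := by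
      exact_mod_cast congrArg (Nat.cast : ℕ → ℤ) (Nat.succ_mul_centralBinom_succ j)
    have hB : Bc (j + 1) = ((j + 1).centralBinom : ℤ) := rfl
    have hc : c (j + 1) = 2 * (catalan j : ℤ) := by simp [c]
    have hj : ((j : ℤ) + 1) ≠ 0 := by positivity
    apply mul_left_cancel₀ hj
    rw [hc, hB]
    push_cast
    linear_combination (4 * (j : ℤ) + 2) * h1 - h2

lemma B_succ (l m : ℕ) (hm : m = l + 1) :
    ((l : ℤ) + 1) * Bc m = (4 * (l : ℤ) + 2) * Bc l := by
  subst hm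
  have h2 : ((l : ℤ) + 1) * ((l + 1).centralBinom : ℤ)
      = 2 * (2 * (l : ℤ) + 1) * (l.centralBinom : ℤ) := by
    exact_mod_cast congrArg (Nat.cast : ℕ → ℤ) (Nat.succ_mul_centralBinom_succ l)
  have hB : Bc (l + 1) = ((l + 1).centralBinom : ℤ) := rfl
  have hB' : Bc l = (l.centralBinom : ℤ) := rfl
  rw [hB, hB']
  linarith

lemma cB4 (k : ℕ) : c (k + 1) + Bc (k + 1) = 4 * Bc k := by
  have h1 : ((k : ℤ) + 1) * (catalan k : ℤ) = (k.centralBinom : ℤ) := by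
    exact_mod_cast congrArg (Nat.cast : ℕ → ℤ) (succ_mul_catalan_eq_centralBinom k)
  have h2 := B_succ k (k + 1) rfl
  have hB' : Bc k = (k.centralBinom : ℤ) := rfl
  have hc : c (k + 1) = 2 * (catalan k : ℤ) := by simp [c]
  have hj : ((k : ℤ) + 1) ≠ 0 := by positivity
  apply mul_left_cancel₀ hj
  rw [hc]
  linear_combination 2 * h1 + h2 - 2 * hB'

/-! ### Extending the ranges of the defining sums -/

lemma W_ext (n m : ℕ) (h : n < 2 * m) :
    W n = ∑ k ∈ Finset.range m, ((n.choose (2 * k) : ℕ) : ℤ) * c k := by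
  rw [W]
  apply Finset.sum_subset
  · exact Finset.range_subset_range.2 (by omega)
  · intro k hk hk2
    simp only [Finset.mem_range] at hk hk2
    have : n < 2 * k := by omega
    simp [Nat.choose_eq_zero_of_lt this]

lemma T_ext (n m : ℕ) (h : n < 2 * m) :
    T n = ∑ l ∈ Finset.range m, ((n.choose (2 * l) : ℕ) : ℤ) * Bc l := by
  rw [T]
  simp only [Bc]
  apply Finset.sum_subset
  · exact Finset.range_subset_range.2 (by omega)
  · intro k hk hk2
    simp only [Finset.mem_range] at hk hk2
    have : n < 2 * k := by omega
    simp [Nat.choose_eq_zero_of_lt this]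

/-! ### Parity facts -/

lemma W_odd (n : ℕ) : ∃ a : ℤ, W n = 2 * a - 1 := by
  refine ⟨∑ k ∈ Finset.range (n / 2), ((n.choose (2 * (k + 1)) : ℕ) : ℤ) * (catalan k : ℤ), ?_⟩
  rw [W, Finset.sum_range_succ']
  have hpt : ∀ k, ((n.choose (2 * (k + 1)) : ℕ) : ℤ) * c (k + 1)
      = 2 * (((n.choose (2 * (k + 1)) : ℕ) : ℤ) * (catalan k : ℤ)) := by
    intro k
    simp only [c, Nat.succ_ne_zero, if_false, Nat.add_sub_cancel]
    ring
  rw [Finset.sum_congr rfl (fun k _ => hpt k), ← Finset.mul_sum]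
  simp [c]
  ring

lemma WT4 (n : ℕ) : ∃ t : ℤ, W n + T n = 4 * t := by
  refine ⟨∑ k ∈ Finset.range (n / 2), ((n.choose (2 * (k + 1)) : ℕ) : ℤ) * Bc k, ?_⟩
  have hT : T n = ∑ l ∈ Finset.range (n / 2 + 1), ((n.choose (2 * l) : ℕ) : ℤ) * Bc l :=
    T_ext n (n / 2 + 1) (by omega)
  rw [W, hT, ← Finset.sum_add_distrib, Finset.sum_range_succ']
  have hpt : ∀ k, (((n.choose (2 * (k + 1)) : ℕ) : ℤ) * c (k + 1)
        + ((n.choose (2 * (k + 1)) : ℕ) : ℤ) * Bc (k + 1))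
      = 4 * (((n.choose (2 * (k + 1)) : ℕ) : ℤ) * Bc k) := by
    intro k
    have := cB4 k
    linear_combination ((n.choose (2 * (k + 1)) : ℕ) : ℤ) * this
  rw [Finset.sum_congr rfl (fun k _ => hpt k), ← Finset.mul_sum]
  have h0 : ((n.choose (2 * 0) : ℕ) : ℤ) * c 0 + ((n.choose (2 * 0) : ℕ) : ℤ) * Bc 0 = 0 := by
    simp [c, Bc]
  rw [h0]
  ring

/-! ### The linear relation between T and W -/

lemma T_eq (n : ℕ) : T (n + 1) = (n : ℤ) * W (n + 1) - ((n : ℤ) + 1) * W n := by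
  have h1 : n + 1 < 2 * ((n + 1) / 2 + 1) := by omega
  have h0 : n < 2 * ((n + 1) / 2 + 1) := by omega
  rw [T_ext (n + 1) _ h1, W_ext (n + 1) _ h1, W_ext n _ h0,
    Finset.mul_sum, Finset.mul_sum, ← Finset.sum_sub_distrib]
  refine Finset.sum_congr rfl fun k _ => ?_
  have h2 := absorb_z n (2 * k)
  have h3 := cB k
  push_cast at h2 ⊢
  linear_combination (-(((n + 1).choose (2 * k) : ℕ) : ℤ)) * h3 - (c k) * h2

/-! ### The trinomial coefficient recurrence -/

lemma Pn (n j : ℕ) :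
    ((j : ℤ) + 2) * ((n : ℤ) + 2) * (((n + 2).choose (2 * j + 2) : ℕ) : ℤ)
      + 4 * ((j : ℤ) + 2) * (2 * (j : ℤ) + 3) * (((n + 1).choose (2 * j + 3) : ℕ) : ℤ)
    = ((j : ℤ) + 2) * (2 * (n : ℤ) + 3) * (((n + 1).choose (2 * j + 2) : ℕ) : ℤ)
      + 3 * ((n : ℤ) + 1) * ((j : ℤ) + 2) * ((n.choose (2 * j + 2) : ℕ) : ℤ)
      + (2 * (j : ℤ) + 2) * ((j : ℤ) + 2) * (((n + 1).choose (2 * j + 1) : ℕ) : ℤ) := by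
  have h7 := pascal_z (n + 2) (2 * j + 1) (2 * j + 2) (n + 1) (by omega) (by omega)
  have h2 := absorb_z n (2 * j + 2)
  have h3 := succ_mul_choose_z n (2 * j + 2) (2 * j + 3) (by omega)
  have h4 := succ_mul_choose_z n (2 * j + 1) (2 * j + 2) (by omega)
  have h5 := absorb_z n (2 * j + 1)
  push_cast at h2 h3 h4 h5
  linear_combination ((j : ℤ) + 2) * ((n : ℤ) + 2) * h7 - ((j : ℤ) + 2) * h2
    + 4 * ((j : ℤ) + 2) * h3 - ((j : ℤ) + 2) * h4 + ((j : ℤ) + 2) * h5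

lemma key (n l : ℕ) :
    ((n : ℤ) + 2) * ((((n + 2).choose (2 * l) : ℕ) : ℤ) * Bc l)
      - ((2 * (n : ℤ) + 3) * ((((n + 1).choose (2 * l) : ℕ) : ℤ) * Bc l)
        + (3 * (n : ℤ) + 3) * (((n.choose (2 * l) : ℕ) : ℤ) * Bc l))
    = gfun n l - gfun n (l + 1) := by
  cases l with
  | zero =>
    have hB1 : Bc 1 = 2 := by norm_num [Bc]
    have hB0 : Bc 0 = 1 := by norm_num [Bc]
    have hc1 : ((n + 1).choose 1 : ℕ) = n + 1 := Nat.choose_one_right _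
    simp only [gfun, Nat.mul_zero, Nat.mul_one, Nat.choose_zero_right, hB0, hB1]
    norm_num [hc1]
    ring
  | succ j =>
    have e1 : 2 * (j + 1) = 2 * j + 2 := by omega
    have e2 : 2 * (j + 1) - 1 = 2 * j + 1 := by omega
    have e3 : 2 * (j + 1 + 1) - 1 = 2 * j + 3 := by omega
    have hP := Pn n j
    have hBs := B_succ (j + 1) (j + 1 + 1) rfl
    have hj : ((j : ℤ) + 2) ≠ 0 := by positivity
    apply mul_left_cancel₀ hj
    simp only [gfun, e1, e2, e3]
    push_cast at hBs ⊢
    linear_combination (Bc (j + 1)) * hP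
      + 2 * ((j : ℤ) + 2) * (((n + 1).choose (2 * j + 3) : ℕ) : ℤ) * hBs

lemma T_rec (n : ℕ) :
    ((n : ℤ) + 2) * T (n + 2) = (2 * (n : ℤ) + 3) * T (n + 1) + (3 * (n : ℤ) + 3) * T n := by
  have e2 : n + 2 < 2 * (n / 2 + 3) := by omega
  have e1 : n + 1 < 2 * (n / 2 + 3) := by omega
  have e0 : n < 2 * (n / 2 + 3) := by omega
  rw [T_ext (n + 2) _ e2, T_ext (n + 1) _ e1, T_ext n _ e0,
    Finset.mul_sum, Finset.mul_sum, Finset.mul_sum, ← sub_eq_zero,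
    ← Finset.sum_add_distrib, ← Finset.sum_sub_distrib]
  rw [Finset.sum_congr rfl (fun l _ => key n l), Finset.sum_range_sub' (gfun n)]
  have hM : gfun n (n / 2 + 3) = 0 := by
    have hz : ((n + 1).choose (2 * (n / 2 + 3) - 1)) = 0 :=
      Nat.choose_eq_zero_of_lt (by omega)
    simp [gfun, hz]
  have h0 : gfun n 0 = 0 := by simp [gfun]
  rw [hM, h0]
  ring

/-! ### The master identity -/

lemma master (n : ℕ) :
    2 * ((n : ℤ) + 1) * Ssum (n + 1) =
      (3 - 5 * ((n : ℤ) + 1) - 2 * ((n : ℤ) + 1) ^ 2 + 4 * ((n : ℤ) + 1) ^ 3) * (W (n + 1)) ^ 2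
      + (6 + ((n : ℤ) + 1) - 10 * ((n : ℤ) + 1) ^ 2) * (W (n + 1)) * (T (n + 1))
      + (9 * ((n : ℤ) + 1) - 6 * ((n : ℤ) + 1) ^ 2) * (W (n + 1)) * (T n)
      + (3 + 6 * ((n : ℤ) + 1)) * (T (n + 1)) ^ 2
      + 9 * ((n : ℤ) + 1) * (T (n + 1)) * (T n) := by
  induction n with
  | zero =>
    have hW0 : W 0 = -1 := by norm_num [W, c]
    have hW1 : W 1 = -1 := by norm_num [W, c]
    have hT0 : T 0 = 1 := by norm_num [T]
    have hT1 : T 1 = 1 := by norm_num [T]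
    have hS1 : Ssum 1 = 9 := by norm_num [Ssum, hW0]
    rw [hW1, hT0, hT1, hS1]
    norm_num
  | succ n ih =>
    have hS : Ssum (n + 2) = Ssum (n + 1) + (8 * ((n : ℤ) + 1) + 9) * (W (n + 1)) ^ 2 := by
      rw [Ssum, Ssum, Finset.sum_range_succ]
      push_cast
      ring
    have hL := T_eq (n + 1)
    have hidx : n + 1 + 1 = n + 2 := rfl
    rw [hidx] at hL
    push_cast at hL
    have hR := T_rec n
    have hU : ((n : ℤ) + 1) * ((n : ℤ) + 2) * (W (n + 2))
        = (2 * (n : ℤ) + 3) * T (n + 1) + (3 * (n : ℤ) + 3) * T n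
          + ((n : ℤ) + 2) ^ 2 * (W (n + 1)) := by
      linear_combination (-((n : ℤ) + 2)) * hL + hR
    have hfac : (((n : ℤ) + 1) ^ 2 * ((n : ℤ) + 2) ^ 2) ≠ 0 := by positivity
    rw [hidx]
    push_cast
    rw [hS]
    apply mul_left_cancel₀ hfac
    linear_combination
      (-((3 - 5 * ((n : ℤ) + 2) - 2 * ((n : ℤ) + 2) ^ 2 + 4 * ((n : ℤ) + 2) ^ 3)
          * (((n : ℤ) + 1) * ((n : ℤ) + 2) * (W (n + 2))
            + ((2 * (n : ℤ) + 3) * T (n + 1) + (3 * (n : ℤ) + 3) * T n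
              + ((n : ℤ) + 2) ^ 2 * (W (n + 1))))
        + (6 + ((n : ℤ) + 2) - 10 * ((n : ℤ) + 2) ^ 2) * ((n : ℤ) + 1)
          * (((n : ℤ) + 2) * T (n + 2))
        + (9 * ((n : ℤ) + 2) - 6 * ((n : ℤ) + 2) ^ 2) * ((n : ℤ) + 1) * ((n : ℤ) + 2)
          * (T (n + 1)))) * hU
      + (-((6 + ((n : ℤ) + 2) - 10 * ((n : ℤ) + 2) ^ 2) * ((n : ℤ) + 1)
          * ((2 * (n : ℤ) + 3) * T (n + 1) + (3 * (n : ℤ) + 3) * T n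
            + ((n : ℤ) + 2) ^ 2 * (W (n + 1)))
        + (3 + 6 * ((n : ℤ) + 2)) * ((n : ℤ) + 1) ^ 2
          * (((n : ℤ) + 2) * T (n + 2)
            + ((2 * (n : ℤ) + 3) * T (n + 1) + (3 * (n : ℤ) + 3) * T n))
        + 9 * ((n : ℤ) + 2) * ((n : ℤ) + 1) ^ 2 * ((n : ℤ) + 2) * (T (n + 1)))) * hR
      + ((n : ℤ) + 1) * ((n : ℤ) + 2) ^ 3 * ih

/-! ### Main theorem -/

theorem stmt_0 (n : ℕ) (hn : 0 < n) :
    (∑ k ∈ Finset.range n, (8 * (k : ℤ) + 9) * (W k) ^ 2) ≡ (n : ℤ) [ZMOD (2 * (n : ℤ))] := by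
  obtain ⟨m, rfl⟩ : ∃ m, n = m + 1 := ⟨n - 1, by omega⟩
  have hM := master m
  have hL := T_eq m
  obtain ⟨a, ha⟩ := W_odd (m + 1)
  obtain ⟨b, hb⟩ := W_odd m
  obtain ⟨t, ht⟩ := WT4 m
  have hTm : T m = 4 * t - 2 * b + 1 := by linarith
  have hnum : 2 * ((m : ℤ) + 1) * Ssum (m + 1)
      = ((m : ℤ) + 1) ^ 2 * ((5 - 2 * ((m : ℤ) + 1)) * (W (m + 1)) * (W m)
        + (3 + 6 * ((m : ℤ) + 1)) * (W m) ^ 2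
        + 3 * (W (m + 1)) * (T m) - 9 * (W m) * (T m)) := by
    linear_combination hM
      + ((6 + ((m : ℤ) + 1) - 10 * ((m : ℤ) + 1) ^ 2) * (W (m + 1))
        + (3 + 6 * ((m : ℤ) + 1)) * (T (m + 1) + ((m : ℤ) * W (m + 1) - ((m : ℤ) + 1) * W m))
        + 9 * ((m : ℤ) + 1) * (T m)) * hL
  set Qv : ℤ := 3 + 6 * t - 13 * b - 18 * b * t + 12 * b ^ 2 - a + 6 * a * t + 2 * a * b
      + ((m : ℤ) + 1) - 5 * ((m : ℤ) + 1) * b + 6 * ((m : ℤ) + 1) * b ^ 2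
      + ((m : ℤ) + 1) * a - 2 * ((m : ℤ) + 1) * a * b with hQv
  have hnum2 : (5 - 2 * ((m : ℤ) + 1)) * (W (m + 1)) * (W m)
        + (3 + 6 * ((m : ℤ) + 1)) * (W m) ^ 2
        + 3 * (W (m + 1)) * (T m) - 9 * (W m) * (T m) = 4 * Qv + 2 := by
    rw [ha, hb, hTm, hQv]
    ring
  have hfinal : Ssum (m + 1) = ((m : ℤ) + 1) * (2 * Qv + 1) := by
    have h2 : (2 * ((m : ℤ) + 1)) ≠ 0 := by positivity
    apply mul_left_cancel₀ h2
    linear_combination hnum + ((m : ℤ) + 1) ^ 2 * hnum2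
  have hdvd : (2 * ((m + 1 : ℕ) : ℤ)) ∣ (((m + 1 : ℕ) : ℤ) - Ssum (m + 1)) := by
    refine ⟨-Qv, ?_⟩
    push_cast
    linear_combination -hfinal
  exact (Int.modEq_iff_dvd.mpr hdvd)
end

section
/- For every prime p > 3, W_p ≡ −1 − p·(1 + 3a − 4b) (mod p²), where a = (−3|p) and b = (−1|p) are Legendre symbols. -/
open Finset

lemma re_sum {d : ℤ} (s : Finset ℕ) (f : ℕ → Zsqrtd d) :
    (∑ x ∈ s, f x).re = ∑ x ∈ s, (f x).re := by
  classical
  induction s using Finset.induction_on with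
  | empty => simp
  | insert _ _ h ih => simp [Finset.sum_insert h, Zsqrtd.re_add, ih]

lemma sqrtd_pow_even (d : ℤ) (i : ℕ) :
    (Zsqrtd.sqrtd : Zsqrtd d) ^ (2*i) = ((d^i : ℤ) : Zsqrtd d) := by
  rw [pow_mul]
  have h : (Zsqrtd.sqrtd : Zsqrtd d) ^ 2 = ((d : ℤ) : Zsqrtd d) := by
    ext <;> simp [pow_two, Zsqrtd.re_mul, Zsqrtd.im_mul]
  rw [h]
  push_cast
  ring

lemma zsqrtd_pow_re (d : ℤ) (n : ℕ) :
    ((1 + Zsqrtd.sqrtd : Zsqrtd d) ^ n).re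
      = ∑ i ∈ range (n/2+1), (n.choose (2*i) : ℤ) * d^i := by
  rw [add_comm, add_pow, re_sum]
  have key : ∀ j ∈ range (n+1), ((Zsqrtd.sqrtd : Zsqrtd d)^j * 1^(n-j) * (n.choose j : ℕ)).re
      = if Even j then (n.choose j : ℤ) * d^(j/2) else 0 := by
    intro j _
    rcases Nat.even_or_odd j with he | ho
    · have h2 : 2 * (j/2) = j := (Nat.two_mul_div_two_of_even he)
      rw [if_pos he, ← h2, sqrtd_pow_even, one_pow, mul_one]
      simp only [Zsqrtd.re_mul, Zsqrtd.im_mul, Zsqrtd.re_intCast, Zsqrtd.im_intCast,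
        Zsqrtd.re_natCast, Zsqrtd.im_natCast]
      rw [Nat.mul_div_cancel_left _ (by norm_num : 0 < 2)]
      push_cast
      ring
    · obtain ⟨i, hi⟩ := ho
      subst hi
      have h3 : (Zsqrtd.sqrtd : Zsqrtd d)^(2*i+1) = ((d^i : ℤ) : Zsqrtd d) * Zsqrtd.sqrtd := by
        rw [pow_succ, sqrtd_pow_even]
      rw [if_neg (by rw [Nat.even_iff]; omega), one_pow, mul_one, h3]
      simp only [Zsqrtd.re_mul, Zsqrtd.im_mul, Zsqrtd.re_intCast, Zsqrtd.im_intCast,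
        Zsqrtd.re_natCast, Zsqrtd.im_natCast, Zsqrtd.re_sqrtd, Zsqrtd.im_sqrtd]
      ring
  rw [Finset.sum_congr rfl key, ← Finset.sum_filter]
  apply Finset.sum_nbij' (fun j => j / 2) (fun i => 2 * i)
  · intro j hj
    simp only [Finset.mem_filter, Finset.mem_range] at hj ⊢
    omega
  · intro i hi
    simp only [Finset.mem_filter, Finset.mem_range] at hi ⊢
    exact ⟨by omega, ⟨i, by omega⟩⟩
  · intro j hj
    simp only [Finset.mem_filter, Finset.mem_range] at hj
    obtain ⟨-, i, hi⟩ := hj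
    omega
  · intro i _
    omega
  · intro j hj
    simp only [Finset.mem_filter, Finset.mem_range] at hj
    obtain ⟨-, i, hi⟩ := hj
    have : 2 * (j/2) = j := by omega
    rw [this]

lemma sum_choose_even {n : ℕ} (hn : 1 ≤ n) :
    ∑ i ∈ range (n/2+1), (n.choose (2*i) : ℤ) = 2^(n-1) := by
  have key : ∀ k : ℕ, (1 + Zsqrtd.sqrtd : Zsqrtd 1) ^ (k+1)
      = ((2^k : ℤ) : Zsqrtd 1) * (1 + Zsqrtd.sqrtd) := by
    intro k
    induction k with
    | zero => simp
    | succ k ih =>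
      rw [pow_succ, ih]
      ext <;>
        simp [Zsqrtd.re_mul, Zsqrtd.im_mul, Zsqrtd.re_add, Zsqrtd.im_add, pow_succ] <;> ring
  obtain ⟨k, rfl⟩ : ∃ k, n = k + 1 := ⟨n - 1, by omega⟩
  have h := zsqrtd_pow_re 1 (k+1)
  rw [key k] at h
  simp only [Zsqrtd.re_mul, Zsqrtd.re_intCast, Zsqrtd.im_intCast, Zsqrtd.re_add, Zsqrtd.im_add,
    Zsqrtd.re_one, Zsqrtd.im_one, Zsqrtd.re_sqrtd, Zsqrtd.im_sqrtd] at h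
  simp only [one_pow, mul_one] at h ⊢
  rw [← h]
  simp

lemma sum_choose_even_neg3 {n : ℕ} (hn : n % 6 = 1 ∨ n % 6 = 5) :
    ∑ i ∈ range (n/2+1), (n.choose (2*i) : ℤ) * (-3)^i = 2^(n-1) := by
  set A : Zsqrtd (-3) := 1 + Zsqrtd.sqrtd with hA
  have h3 : A ^ 3 = ((-8 : ℤ) : Zsqrtd (-3)) := by
    ext <;> simp [hA, pow_succ, Zsqrtd.re_mul, Zsqrtd.im_mul, Zsqrtd.re_add, Zsqrtd.im_add] <;> ring
  have h6 : A ^ 6 = ((64 : ℤ) : Zsqrtd (-3)) := by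
    have : A ^ 6 = (A ^ 3) ^ 2 := by ring
    rw [this, h3]
    ext <;> simp [Zsqrtd.re_mul, Zsqrtd.im_mul, pow_two]
  have hsplit : A ^ n = ((64 : ℤ) : Zsqrtd (-3)) ^ (n/6) * A ^ (n % 6) := by
    rw [← h6, ← pow_mul, ← pow_add]
    congr 1
    omega
  have hre : (A ^ n).re = 64 ^ (n/6) * (A ^ (n % 6)).re := by
    rw [hsplit]
    have : (((64 : ℤ) : Zsqrtd (-3)) ^ (n/6)) = (((64^(n/6) : ℤ)) : Zsqrtd (-3)) := by push_cast; ring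
    rw [this, Zsqrtd.re_mul, Zsqrtd.re_intCast, Zsqrtd.im_intCast]
    ring
  have h := (zsqrtd_pow_re (-3) n).symm
  rw [h, hre]
  rcases hn with h1 | h5
  · rw [h1]
    have : (A ^ 1).re = 1 := by simp [hA]
    rw [this, mul_one]
    have : (64 : ℤ) = 2^6 := by norm_num
    rw [this, ← pow_mul]
    congr 1
    omega
  · rw [h5]
    have : (A ^ 5).re = 16 := by
      have : A ^ 5 = A ^ 3 * A ^ 2 := by ring
      rw [this, h3]
      simp [hA, pow_two, Zsqrtd.re_mul, Zsqrtd.im_mul, Zsqrtd.re_add, Zsqrtd.im_add]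
    rw [this]
    have h64 : (64 : ℤ) = 2^6 := by norm_num
    have h16 : (16 : ℤ) = 2^4 := by norm_num
    rw [h64, h16, ← pow_mul, ← pow_add]
    congr 1
    omega

section
variable (p : ℕ) [Fact p.Prime] (hp : 3 < p)

noncomputable def pi' : ZMod (p^2) →+* ZMod p := ZMod.castHom (dvd_pow_self p two_ne_zero) (ZMod p)

-- p * z = 0 in R iff pi z = 0
lemma pmul_zero_of_pi {z : ZMod (p^2)} (h : pi' p z = 0) : (p : ZMod (p^2)) * z = 0 := by
  obtain ⟨v, rfl⟩ := ZMod.natCast_zmod_surjective (n := p^2) z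
  rw [map_natCast] at h
  obtain ⟨c, rfl⟩ := (ZMod.natCast_eq_zero_iff v p).mp h
  rw [← Nat.cast_mul]
  exact (ZMod.natCast_eq_zero_iff _ _).mpr ⟨c, by ring⟩

lemma pi_zero_of_pmul {z : ZMod (p^2)} (h : (p : ZMod (p^2)) * z = 0) : pi' p z = 0 := by
  obtain ⟨v, rfl⟩ := ZMod.natCast_zmod_surjective (n := p^2) z
  rw [map_natCast]
  rw [← Nat.cast_mul] at h
  have := (ZMod.natCast_eq_zero_iff (p*v) (p^2)).mp h
  rw [pow_two] at this
  have : p ∣ v := (mul_dvd_mul_iff_left (Nat.Prime.ne_zero Fact.out : p ≠ 0)).mp this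
  exact (ZMod.natCast_eq_zero_iff v p).mpr this

lemma pmul_congr {z w : ZMod (p^2)} (h : pi' p z = pi' p w) : (p : ZMod (p^2)) * z = p * w := by
  have : (p : ZMod (p^2)) * (z - w) = 0 := pmul_zero_of_pi p (by rw [map_sub, h, sub_self])
  rw [mul_sub] at this
  linear_combination this


lemma unit_of_lt {t : ℕ} (h0 : t ≠ 0) (h1 : t < p) : IsUnit ((t : ℕ) : ZMod (p^2)) := by
  rw [ZMod.isUnit_iff_coprime]
  apply Nat.Coprime.pow_right
  rw [Nat.coprime_comm]
  exact (Nat.Prime.coprime_iff_not_dvd Fact.out).mpr (Nat.not_dvd_of_pos_of_lt (by omega) h1)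

lemma cast_ne_zero_of_lt {t : ℕ} (h0 : t ≠ 0) (h1 : t < p) : ((t : ℕ) : ZMod p) ≠ 0 := by
  intro h
  have := (ZMod.natCast_eq_zero_iff t p).mp h
  have := Nat.le_of_dvd (by omega) this
  omega

lemma pi_inv (t : ℕ) (h0 : t ≠ 0) (h1 : t < p) :
    pi' p (((t : ℕ) : ZMod (p^2))⁻¹) = ((t : ℕ) : ZMod p)⁻¹ := by
  have hu := unit_of_lt p h0 h1
  have h2 : pi' p (((t : ℕ) : ZMod (p^2))⁻¹) * ((t : ℕ) : ZMod p) = 1 := by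
    have := ZMod.inv_mul_of_unit _ hu
    calc pi' p (((t : ℕ) : ZMod (p^2))⁻¹) * ((t : ℕ) : ZMod p)
        = pi' p ((((t : ℕ) : ZMod (p^2)))⁻¹ * ((t : ℕ) : ZMod (p^2))) := by rw [map_mul, map_natCast]
      _ = 1 := by rw [this, map_one]
  exact eq_inv_of_mul_eq_one_left h2

lemma choose_p_sub_one (j : ℕ) (hj : j < p) : (((p-1).choose j : ℕ) : ZMod p) = (-1)^j := by
  induction j with
  | zero => simp
  | succ j ih =>
    have hjp : j < p := by omega
    have hpas : (p-1).choose j + (p-1).choose (j+1) = p.choose (j+1) := by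
      have hp1 : p - 1 + 1 = p := by omega
      rw [← hp1]
      exact (Nat.choose_succ_succ _ _).symm
    have hdvd : p ∣ p.choose (j+1) := Nat.Prime.dvd_choose_self Fact.out (by omega) hj
    have hzero : ((p.choose (j+1) : ℕ) : ZMod p) = 0 :=
      (ZMod.natCast_eq_zero_iff _ _).mpr hdvd
    have : (((p-1).choose j : ℕ) : ZMod p) + (((p-1).choose (j+1) : ℕ) : ZMod p) = 0 := by
      rw [← Nat.cast_add, hpas, hzero]
    rw [ih hjp] at this
    rw [pow_succ]
    linear_combination this

lemma choose_p_eq (hp : 3 < p) (k : ℕ) (hk1 : 1 ≤ k) (hk2 : k ≤ p/2) :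
    ((p.choose (2*k) : ℕ) : ZMod (p^2)) = -(p : ZMod (p^2)) * (((2*k : ℕ) : ZMod (p^2)))⁻¹ := by
  have hm : 2*(p/2)+1 = p := by
    have h2 : p % 2 = 1 := (Nat.Prime.eq_two_or_odd (Fact.out : p.Prime)).resolve_left (by omega)
    omega
  have h2k : 2*k < p := by omega
  have hu : IsUnit ((2*k : ℕ) : ZMod (p^2)) := unit_of_lt p (by omega) h2k
  -- p * C(p-1, 2k-1) = C(p,2k) * 2k
  have hnat : p * (p-1).choose (2*k-1) = p.choose (2*k) * (2*k) := by
    have h := Nat.add_one_mul_choose_eq (p-1) (2*k-1)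
    have hp1 : p - 1 + 1 = p := by omega
    have hk1' : 2*k - 1 + 1 = 2*k := by omega
    simpa [Nat.succ_eq_add_one, hp1, hk1'] using h
  -- in R
  have hR : ((p.choose (2*k) : ℕ) : ZMod (p^2)) * ((2*k : ℕ) : ZMod (p^2)) = -(p : ZMod (p^2)) := by
    have hcast : ((p.choose (2*k) : ℕ) : ZMod (p^2)) * ((2*k : ℕ) : ZMod (p^2))
        = (p : ZMod (p^2)) * (((p-1).choose (2*k-1) : ℕ) : ZMod (p^2)) := by
      rw [← Nat.cast_mul, ← Nat.cast_mul, ← hnat]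
    rw [hcast]
    have hpi : pi' p ((((p-1).choose (2*k-1) : ℕ) : ZMod (p^2))) = pi' p (-1) := by
      rw [map_natCast, map_neg, map_one]
      rw [choose_p_sub_one p (2*k-1) (by omega)]
      rw [Odd.neg_one_pow ⟨k-1, by omega⟩]
    have := pmul_congr p hpi
    rw [this, mul_neg_one]
  calc ((p.choose (2*k) : ℕ) : ZMod (p^2))
      = ((p.choose (2*k) : ℕ) : ZMod (p^2)) * (((2*k:ℕ) : ZMod (p^2)) * (((2*k:ℕ) : ZMod (p^2)))⁻¹) := by
        rw [ZMod.mul_inv_of_unit _ hu, mul_one]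
    _ = (((p.choose (2*k) : ℕ) : ZMod (p^2)) * ((2*k:ℕ) : ZMod (p^2))) * (((2*k:ℕ) : ZMod (p^2)))⁻¹ := by ring
    _ = -(p : ZMod (p^2)) * (((2*k:ℕ) : ZMod (p^2)))⁻¹ := by rw [hR]

end

section
variable (p : ℕ) [Fact p.Prime]


lemma hodd' (hp : 3 < p) : 2*(p/2)+1 = p := by
  have h2 : p % 2 = 1 := (Nat.Prime.eq_two_or_odd (Fact.out : p.Prime)).resolve_left (by omega)
  omega

lemma central_binom_mod (hp : 3 < p) (k : ℕ) (hk : k ≤ p/2) :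
    (((2*k).choose k : ℕ) : ZMod p) = (-4)^k * (((p/2).choose k : ℕ) : ZMod p) := by
  induction k with
  | zero => simp
  | succ k ih =>
    have hm := hodd' p hp
    have hk' : k ≤ p/2 := by omega
    have e2 := ih hk'
    have h1 : (k+1) * ((2*(k+1)).choose (k+1)) = 2*(2*k+1) * ((2*k).choose k) := by
      have h := Nat.succ_mul_centralBinom_succ k
      rwa [Nat.centralBinom, Nat.centralBinom] at h
    have h2 : ((p/2).choose (k+1)) * (k+1) = (p/2).choose k * (p/2 - k) := Nat.choose_succ_right_eq _ _
    have hk1ne : ((k+1 : ℕ) : ZMod p) ≠ 0 := cast_ne_zero_of_lt p (by omega) (by omega)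
    have e1 : ((k:ZMod p)+1) * (((2*(k+1)).choose (k+1) : ℕ) : ZMod p)
        = 2*(2*(k:ZMod p)+1) * (((2*k).choose k : ℕ) : ZMod p) := by
      have := congrArg (fun t : ℕ => (t : ZMod p)) h1
      push_cast at this
      linear_combination this
    have e3 : (((p/2).choose (k+1) : ℕ) : ZMod p) * ((k:ZMod p)+1)
        = (((p/2).choose k : ℕ) : ZMod p) * (((p/2 : ℕ) : ZMod p) - (k : ZMod p)) := by
      have := congrArg (fun t : ℕ => (t : ZMod p)) h2
      push_cast [Nat.cast_sub hk'] at this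
      linear_combination this
    have e4 : 2*((p/2 : ℕ) : ZMod p) + 1 = 0 := by
      have := congrArg (fun t : ℕ => (t : ZMod p)) hm
      push_cast at this
      rw [ZMod.natCast_self] at this
      linear_combination this
    apply mul_left_cancel₀ hk1ne
    have hcast : ((k+1 : ℕ) : ZMod p) = (k : ZMod p) + 1 := by push_cast; ring
    rw [hcast]
    push_cast
    linear_combination e1 + (2*(2*(k:ZMod p)+1))*e2 - (-4 : ZMod p)^(k+1)*e3
      + (2*(-4 : ZMod p)^k*(((p/2).choose k : ℕ) : ZMod p))*e4

lemma c_mul (k : ℕ) : ((2*(k+1) - 1 : ℕ) : ℤ) * c (k+1) = (((2*(k+1)).choose (k+1) : ℕ) : ℤ) := by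
  have h1 : (k+1) * ((2*(k+1)).choose (k+1)) = 2*(2*k+1) * ((k+1) * catalan k) := by
    have h := Nat.succ_mul_centralBinom_succ k
    rw [succ_mul_catalan_eq_centralBinom]
    rwa [Nat.centralBinom] at h
    
  have h2 : ((2*(k+1)).choose (k+1)) = (2*k+1) * (2 * catalan k) := by
    have := h1
    have hpos : 0 < k + 1 := Nat.succ_pos k
    apply Nat.eq_of_mul_eq_mul_left hpos
    rw [this]; ring
  have hc : c (k+1) = 2 * (catalan k : ℤ) := by simp [c]
  rw [hc]
  have : (2*(k+1) - 1 : ℕ) = 2*k+1 := by omega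
  rw [this, h2]
  push_cast
  ring

lemma c_mod (hp : 3 < p) (k : ℕ) (hk1 : 1 ≤ k) (hk2 : k ≤ p/2) :
    ((c k : ℤ) : ZMod p) = -(-4)^k * (((p/2+1).choose k : ℕ) : ZMod p) := by
  have hm := hodd' p hp
  obtain ⟨j, rfl⟩ : ∃ j, k = j + 1 := ⟨k - 1, by omega⟩
  have h2k1ne : ((2*(j+1)-1 : ℕ) : ZMod p) ≠ 0 := cast_ne_zero_of_lt p (by omega) (by omega)
  have e1 : ((2*(j+1)-1 : ℕ) : ZMod p) * ((c (j+1) : ℤ) : ZMod p)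
      = (((2*(j+1)).choose (j+1) : ℕ) : ZMod p) := by
    have := congrArg (fun t : ℤ => (t : ZMod p)) (c_mul (j+1-1))
    simp only [Nat.add_sub_cancel] at this
    push_cast at this
    push_cast
    linear_combination this
  have e2 := central_binom_mod p hp (j+1) hk2
  have e3 : (((p/2).choose (j+1) : ℕ) : ZMod p) * (((p/2 : ℕ):ZMod p) + 1)
      = (((p/2+1).choose (j+1) : ℕ) : ZMod p) * ((((p/2 : ℕ):ZMod p) + 1) - ((j+1 : ℕ) : ZMod p)) := by
    have h := Nat.choose_mul_succ_eq (p/2) (j+1)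
    have := congrArg (fun t : ℕ => (t : ZMod p)) h
    push_cast [Nat.cast_sub (by omega : j ≤ p/2)] at this
    push_cast
    linear_combination this
  have e4 : 2*((p/2 : ℕ) : ZMod p) + 1 = 0 := by
    have := congrArg (fun t : ℕ => (t : ZMod p)) hm
    push_cast at this
    rw [ZMod.natCast_self] at this
    linear_combination this
  have h5 : (((p/2).choose (j+1) : ℕ) : ZMod p)
      = (1 - 2*((j+1:ℕ) : ZMod p)) * (((p/2+1).choose (j+1) : ℕ) : ZMod p) := by
    linear_combination 2*e3 + ((((p/2+1).choose (j+1) : ℕ) : ZMod p) - (((p/2).choose (j+1) : ℕ) : ZMod p))*e4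
  apply mul_left_cancel₀ h2k1ne
  have hc1 : ((2*(j+1)-1 : ℕ) : ZMod p) = 2*((j+1:ℕ) : ZMod p) - 1 := by
    push_cast [Nat.cast_sub (by omega : 1 ≤ 2*(j+1))]
    ring
  rw [hc1] at e1 ⊢
  push_cast at e1 e2 h5 ⊢
  linear_combination e1 + e2 + (-4 : ZMod p)^(j+1)*h5


lemma binom_neg4 (n : ℕ) :
    ∑ j ∈ range (n+1), ((n.choose j : ℕ) : ZMod p) * (-4 : ZMod p)^j = (-3)^n := by
  calc ∑ j ∈ range (n+1), ((n.choose j:ℕ):ZMod p) * (-4)^j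
      = ∑ j ∈ range (n+1), (-4:ZMod p)^j * 1^(n-j) * (n.choose j : ℕ) := by
        apply Finset.sum_congr rfl; intro j _; push_cast; ring
    _ = ((-4) + 1)^n := (add_pow _ _ _).symm
    _ = (-3)^n := by norm_num

lemma two_ne_zero_F (hp : 3 < p) : (2 : ZMod p) ≠ 0 := by
  have h := cast_ne_zero_of_lt p (t := 2) (by norm_num) (by omega)
  simpa using h

lemma sum_c_mod (hp : 3 < p) :
    ∑ k ∈ range (p/2), ((c (k+1) : ℤ) : ZMod p)
      = 1 + 3*((legendreSym p (-3) : ℤ) : ZMod p) - 4*((legendreSym p (-1) : ℤ) : ZMod p) := by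
  have hm := hodd' p hp
  have step1 : ∀ k ∈ range (p/2), ((c (k+1) : ℤ) : ZMod p)
      = -(-4 : ZMod p)^(k+1) * (((p/2+1).choose (k+1) : ℕ) : ZMod p) := by
    intro k hk
    simp only [Finset.mem_range] at hk
    exact c_mod p hp (k+1) (by omega) (by omega)
  rw [Finset.sum_congr rfl step1]
  have hbin := binom_neg4 p (p/2+1)
  rw [Finset.sum_range_succ'] at hbin
  rw [Finset.sum_range_succ] at hbin
  simp only [Nat.choose_self, Nat.choose_zero_right, Nat.cast_one, one_mul, pow_zero, mul_one]
    at hbin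
  have hA : ((legendreSym p (-3) : ℤ) : ZMod p) = (-3 : ZMod p)^(p/2) := by
    have h := legendreSym.eq_pow p (-3)
    rw [h]; push_cast; ring
  have hB : ((legendreSym p (-1) : ℤ) : ZMod p) = (-1 : ZMod p)^(p/2) := by
    have h := legendreSym.eq_pow p (-1)
    rw [h]; push_cast; ring
  have h4m : (4 : ZMod p)^(p/2) = 1 := by
    have h2 : (2 : ZMod p)^(p-1) = 1 := ZMod.pow_card_sub_one_eq_one (two_ne_zero_F p hp)
    calc (4:ZMod p)^(p/2) = ((2:ZMod p)^2)^(p/2) := by norm_num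
      _ = (2:ZMod p)^(2*(p/2)) := by rw [← pow_mul]
      _ = (2:ZMod p)^(p-1) := by congr 1; omega
      _ = 1 := h2
  have h4 : (-4 : ZMod p)^(p/2+1) = -4 * (-1:ZMod p)^(p/2) := by
    calc (-4:ZMod p)^(p/2+1) = ((-1)*4:ZMod p)^(p/2) * (-4) := by rw [pow_succ]; norm_num
      _ = (-1:ZMod p)^(p/2) * (4:ZMod p)^(p/2) * (-4) := by rw [mul_pow]
      _ = -4 * (-1:ZMod p)^(p/2) := by rw [h4m]; ring
  have h3 : (-3:ZMod p)^(p/2+1) = -3 * (-3:ZMod p)^(p/2) := by rw [pow_succ]; ring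
  have hsum : ∑ k ∈ range (p/2), (-(-4:ZMod p)^(k+1) * (((p/2+1).choose (k+1):ℕ):ZMod p))
      = -(∑ k ∈ range (p/2), (((p/2+1).choose (k+1):ℕ):ZMod p) * (-4:ZMod p)^(k+1)) := by
    rw [← Finset.sum_neg_distrib]
    apply Finset.sum_congr rfl; intros; ring
  rw [hsum, hA, hB]
  linear_combination -hbin + h4 - h3

lemma phi (hp : 3 < p) (n : ℕ) (hn : n ≤ p/2) :
    ∑ k ∈ range n, ((n.choose (k+1) : ℕ) : ZMod p) * (-4:ZMod p)^(k+1) * (((k+1:ℕ)) : ZMod p)⁻¹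
      = ∑ j ∈ range n, ((-3:ZMod p)^(j+1) - 1) * (((j+1:ℕ)) : ZMod p)⁻¹ := by
  induction n with
  | zero => simp
  | succ n ih =>
    have hn' : n ≤ p/2 := by omega
    have ihh := ih hn'
    have hsplit : ∀ k ∈ range (n+1),
        ((((n+1).choose (k+1)) : ℕ) : ZMod p) * (-4:ZMod p)^(k+1) * (((k+1:ℕ)):ZMod p)⁻¹
        = (((n.choose k) : ℕ) : ZMod p) * (-4:ZMod p)^(k+1) * (((k+1:ℕ)):ZMod p)⁻¹
          + (((n.choose (k+1)) : ℕ) : ZMod p) * (-4:ZMod p)^(k+1) * (((k+1:ℕ)):ZMod p)⁻¹ := by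
      intro k _
      rw [Nat.choose_succ_succ]
      push_cast
      ring
    rw [Finset.sum_congr rfl hsplit, Finset.sum_add_distrib]
    have hdrop : ∑ k ∈ range (n+1),
        ((n.choose (k+1) : ℕ) : ZMod p) * (-4:ZMod p)^(k+1) * (((k+1:ℕ)):ZMod p)⁻¹
        = ∑ k ∈ range n, ((n.choose (k+1) : ℕ) : ZMod p) * (-4:ZMod p)^(k+1) * (((k+1:ℕ)):ZMod p)⁻¹ := by
      rw [Finset.sum_range_succ, Nat.choose_succ_self]
      simp
    have hfirst : ∀ k ∈ range (n+1),
        ((n.choose k : ℕ) : ZMod p) * (-4:ZMod p)^(k+1) * (((k+1:ℕ)):ZMod p)⁻¹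
        = (((n+1).choose (k+1) : ℕ) : ZMod p) * (-4:ZMod p)^(k+1) * (((n+1:ℕ)):ZMod p)⁻¹ := by
      intro k hk
      simp only [Finset.mem_range] at hk
      have hK : (((k+1:ℕ)) : ZMod p) ≠ 0 := cast_ne_zero_of_lt p (by omega) (by omega)
      have hN : (((n+1:ℕ)) : ZMod p) ≠ 0 := cast_ne_zero_of_lt p (by omega) (by omega)
      have h := congrArg (fun t : ℕ => (t : ZMod p)) (Nat.add_one_mul_choose_eq n k)
      push_cast at h ⊢
      have hK' : ((k:ZMod p) + 1) ≠ 0 := by push_cast at hK; exact hK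
      have hN' : ((n:ZMod p) + 1) ≠ 0 := by push_cast at hN; exact hN
      field_simp
      linear_combination (-4:ZMod p)^(k+1) * h
    rw [Finset.sum_congr rfl hfirst, hdrop, ihh]
    have hb := binom_neg4 p (n+1)
    rw [Finset.sum_range_succ'] at hb
    simp only [Nat.choose_zero_right, Nat.cast_one, one_mul, pow_zero, mul_one] at hb
    have hX : ∑ k ∈ range (n+1), (((n+1).choose (k+1):ℕ):ZMod p) * (-4:ZMod p)^(k+1)
          * (((n+1:ℕ)):ZMod p)⁻¹
        = ((-3:ZMod p)^(n+1) - 1) * (((n+1:ℕ)):ZMod p)⁻¹ := by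
      rw [← Finset.sum_mul]
      congr 1
      linear_combination hb
    rw [hX, Finset.sum_range_succ]
    ring

lemma p_mod_6 (hp : 3 < p) : p % 6 = 1 ∨ p % 6 = 5 := by
  have h2 : p % 2 = 1 := (Nat.Prime.eq_two_or_odd (Fact.out : p.Prime)).resolve_left (by omega)
  have h3 : p % 3 ≠ 0 := by
    intro h
    have hdvd : 3 ∣ p := Nat.dvd_of_mod_eq_zero h
    have := (Nat.prime_dvd_prime_iff_eq (by norm_num) (Fact.out : p.Prime)).mp hdvd
    omega
  omega

lemma star (hp : 3 < p) :
    ∑ j ∈ range (p/2), ((-3:ZMod p)^(j+1) - 1) * (((j+1:ℕ)) : ZMod p)⁻¹ = 0 := by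
  have h1 := sum_choose_even_neg3 (n := p) (p_mod_6 p hp)
  have h2 := sum_choose_even (n := p) (by omega)
  rw [Finset.sum_range_succ'] at h1 h2
  -- integer identity
  have hE0 : ∑ k ∈ range (p/2), (p.choose (2*(k+1)) : ℤ) * ((-3:ℤ)^(k+1) - 1) = 0 := by
    have hsplit : ∀ k ∈ range (p/2), (p.choose (2*(k+1)) : ℤ) * ((-3:ℤ)^(k+1) - 1)
        = (p.choose (2*(k+1)) : ℤ) * (-3:ℤ)^(k+1) - (p.choose (2*(k+1)) : ℤ) := by
      intro k _; ring
    rw [Finset.sum_congr rfl hsplit, Finset.sum_sub_distrib]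
    linear_combination h1 - h2
  -- move to ZMod (p^2)
  have hR0 : ∑ k ∈ range (p/2), ((p.choose (2*(k+1)) : ℕ) : ZMod (p^2)) * ((-3:ZMod (p^2))^(k+1) - 1)
      = 0 := by
    have := congrArg (fun t : ℤ => (t : ZMod (p^2))) hE0
    push_cast at this
    convert this using 2
  have hR1 : ∀ k ∈ range (p/2), ((p.choose (2*(k+1)) : ℕ) : ZMod (p^2)) * ((-3:ZMod (p^2))^(k+1) - 1)
      = -(p:ZMod (p^2)) * ((((2*(k+1) : ℕ)) : ZMod (p^2))⁻¹ * ((-3:ZMod (p^2))^(k+1) - 1)) := by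
    intro k hk
    simp only [Finset.mem_range] at hk
    rw [choose_p_eq p hp (k+1) (by omega) (by omega)]
    ring
  rw [Finset.sum_congr rfl hR1, ← Finset.mul_sum] at hR0
  have hpmul : (p : ZMod (p^2)) *
      (∑ k ∈ range (p/2), (((2*(k+1) : ℕ)) : ZMod (p^2))⁻¹ * ((-3:ZMod (p^2))^(k+1) - 1)) = 0 := by
    rw [← neg_eq_zero, ← neg_mul]
    exact hR0
  have hpi := pi_zero_of_pmul p hpmul
  rw [map_sum] at hpi
  have hterm : ∀ k ∈ range (p/2),
      pi' p ((((2*(k+1) : ℕ)) : ZMod (p^2))⁻¹ * ((-3:ZMod (p^2))^(k+1) - 1))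
      = (2:ZMod p)⁻¹ * (((-3:ZMod p)^(k+1) - 1) * (((k+1:ℕ)) : ZMod p)⁻¹) := by
    intro k hk
    simp only [Finset.mem_range] at hk
    have hm := hodd' p hp
    rw [map_mul, map_sub, map_pow, map_one, map_neg]
    rw [pi_inv p (2*(k+1)) (by omega) (by omega)]
    have hc : (((2*(k+1) : ℕ)) : ZMod p) = 2 * (((k+1:ℕ)) : ZMod p) := by push_cast; ring
    rw [hc, mul_inv]
    have h3 : pi' p (3 : ZMod (p^2)) = (3 : ZMod p) := by
      have : ((3:ℕ) : ZMod (p^2)) = (3 : ZMod (p^2)) := by norm_num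
      rw [← this, map_natCast]
      norm_num
    rw [h3]
    ring
  rw [Finset.sum_congr rfl hterm, ← Finset.mul_sum] at hpi
  have h2inv : (2:ZMod p)⁻¹ ≠ 0 := inv_ne_zero (two_ne_zero_F p hp)
  exact (mul_eq_zero.mp hpi).resolve_left h2inv

end

theorem stmt_6 (p : ℕ) [Fact p.Prime] (hp : 3 < p) :
    W p ≡ -1 - (p : ℤ) * (1 + 3 * legendreSym p (-3) - 4 * legendreSym p (-1))
      [ZMOD ((p : ℤ) ^ 2)] := by
  have hmod : ((p:ℤ)^2) = ((p^2 : ℕ) : ℤ) := by push_cast; ring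
  rw [hmod]
  rw [← ZMod.intCast_eq_intCast_iff]
  have hm := hodd' p hp
  -- cast W p into ZMod (p^2)
  rw [show (W p : ℤ) = ∑ k ∈ Finset.range (p / 2 + 1), (p.choose (2 * k) : ℤ) * c k from rfl]
  push_cast
  rw [Finset.sum_range_succ']
  -- k = 0 term
  have hzero : ((p.choose (2*0) : ℕ) : ZMod (p^2)) * ((c 0 : ℤ) : ZMod (p^2)) = -1 := by
    norm_num [c]
  rw [hzero]
  set m := p/2 with hmdef
  set R := ZMod (p^2) with hRdef
  -- rewrite binomial coefficients
  have hstep : ∀ k ∈ range m, ((p.choose (2*(k+1)) : ℕ) : R) * ((c (k+1) : ℤ) : R)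
      = -(p:R) * ((((2*(k+1):ℕ)) : R)⁻¹ * ((c (k+1) : ℤ) : R)) := by
    intro k hk
    simp only [Finset.mem_range] at hk
    rw [choose_p_eq p hp (k+1) (by omega) (by omega)]
    ring
  rw [Finset.sum_congr rfl hstep, ← Finset.mul_sum]
  -- split the sum
  have hsplitS : ∀ k ∈ range m, (((2*(k+1):ℕ)) : R)⁻¹ * ((c (k+1) : ℤ) : R)
      = ((c (k+1) : ℤ) : R)
        - (((2*(k+1):ℕ)) : R)⁻¹ * (((2*(k+1)).choose (k+1) : ℕ) : R) := by
    intro k hk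
    simp only [Finset.mem_range] at hk
    have hu : IsUnit (((2*(k+1):ℕ)) : R) := unit_of_lt p (by omega) (by omega)
    have hinv : (((2*(k+1):ℕ)) : R) * (((2*(k+1):ℕ)) : R)⁻¹ = 1 := ZMod.mul_inv_of_unit _ hu
    have hcm : (((2*(k+1) - 1 : ℕ) : ℕ) : R) * ((c (k+1) : ℤ) : R)
        = (((2*(k+1)).choose (k+1) : ℕ) : R) := by
      have h := congrArg (fun t : ℤ => (t : ZMod (p^2))) (c_mul (k := k))
      push_cast at h
      exact h
    have h1 : (((2*(k+1) - 1 : ℕ) : ℕ) : R) = (((2*(k+1):ℕ)) : R) - 1 := by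
      rw [Nat.cast_sub (by omega)]
      norm_num
    rw [h1] at hcm
    apply IsUnit.mul_left_cancel hu
    linear_combination (((c (k+1) : ℤ) : R) + (((2*(k+1)).choose (k+1) : ℕ) : R)) * hinv - hcm
  rw [Finset.sum_congr rfl hsplitS, Finset.sum_sub_distrib]
  -- the two p-multiples
  have hb0 : (p:R) * (∑ k ∈ range m, (((2*(k+1):ℕ)) : R)⁻¹ * (((2*(k+1)).choose (k+1) : ℕ) : R))
      = 0 := by
    apply pmul_zero_of_pi
    rw [map_sum]
    have hterm : ∀ k ∈ range m,
        pi' p ((((2*(k+1):ℕ)) : R)⁻¹ * (((2*(k+1)).choose (k+1) : ℕ) : R))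
        = (2:ZMod p)⁻¹ * (((m.choose (k+1) : ℕ) : ZMod p) * (-4:ZMod p)^(k+1)
            * (((k+1:ℕ)) : ZMod p)⁻¹) := by
      intro k hk
      simp only [Finset.mem_range] at hk
      have hmm := hodd' p hp
      rw [map_mul, map_natCast, pi_inv p (2*(k+1)) (by omega) (by omega)]
      rw [central_binom_mod p hp (k+1) (by omega)]
      have hc2 : (((2*(k+1):ℕ)) : ZMod p) = 2 * (((k+1:ℕ)) : ZMod p) := by push_cast; ring
      rw [hc2, mul_inv]
      ring
    rw [Finset.sum_congr rfl hterm, ← Finset.mul_sum, phi p hp m (le_refl m), star p hp, mul_zero]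
  have ha : (p:R) * (∑ k ∈ range m, ((c (k+1) : ℤ) : R))
      = (p:R) * (((1 + 3*legendreSym p (-3) - 4*legendreSym p (-1) : ℤ)) : R) := by
    apply pmul_congr
    rw [map_sum, map_intCast]
    have hterm : ∀ k ∈ range m, pi' p ((c (k+1) : ℤ) : R) = ((c (k+1) : ℤ) : ZMod p) := by
      intro k _
      rw [map_intCast]
    rw [Finset.sum_congr rfl hterm, sum_c_mod p hp]
    push_cast
    ring
  push_cast at ha hb0 ⊢
  linear_combination -ha + hb0
end

section
/- For every prime p > 3, W_{p-2} ≡ 7a − 8b (mod p), where a = (−3|p) and b = (−1|p) are Legendre symbols. -/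
open Finset

lemma lemA (p : ℕ) [hF : Fact p.Prime] : ∀ j, j ≤ p - 1 → (((p-1).choose j : ℕ) : ZMod p) = (-1)^j := by
  intro j
  induction j with
  | zero => simp
  | succ j ih =>
    intro hj
    have hp := hF.out
    have hp2 : 2 ≤ p := hp.two_le
    have h1 : (p - 1) + 1 = p := by omega
    have hdvd : p ∣ p.choose (j+1) := hp.dvd_choose_self (by omega) (by omega)
    have pascal : (p-1).choose j + (p-1).choose (j+1) = p.choose (j+1) := by
      conv_rhs => rw [← h1]
      rw [Nat.choose_succ_succ]
    have hz : ((p.choose (j+1) : ℕ) : ZMod p) = 0 :=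
      (ZMod.natCast_eq_zero_iff _ _).2 hdvd
    have := congrArg (fun n : ℕ => (n : ZMod p)) pascal
    push_cast at this
    rw [ih (by omega), hz] at this
    have h2 : ((p-1).choose (j+1) : ZMod p) = -(-1)^j := by linear_combination this
    rw [h2]; ring


lemma lemB (p : ℕ) [hF : Fact p.Prime] (hp3 : 3 ≤ p) :
    ∀ j, j ≤ p - 2 → (((p-2).choose j : ℕ) : ZMod p) = (-1)^j * (j+1) := by
  intro j
  induction j with
  | zero => simp
  | succ j ih =>
    intro hj
    have h1 : (p - 2) + 1 = p - 1 := by omega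
    have pascal : (p-2).choose j + (p-2).choose (j+1) = (p-1).choose (j+1) := by
      conv_rhs => rw [← h1]
      rw [Nat.choose_succ_succ]
    have := congrArg (fun n : ℕ => (n : ZMod p)) pascal
    push_cast at this
    rw [ih (by omega), lemA p (j+1) (by omega)] at this
    have h2 : ((p-2).choose (j+1) : ZMod p) = (-1)^(j+1) - (-1)^j * (j+1) := by
      linear_combination this
    rw [h2]; push_cast; ring


lemma lemC : ∀ k : ℕ, (2*(k:ℤ) - 1) * c k = (Nat.centralBinom k : ℤ) := by
  intro k
  match k with
  | 0 => simp [c, Nat.centralBinom]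
  | (n+1) =>
    have h1 : (n + 1) * Nat.centralBinom (n + 1) = 2 * (2 * n + 1) * Nat.centralBinom n :=
      Nat.succ_mul_centralBinom_succ n
    have h2 : (n + 1) * catalan n = n.centralBinom := succ_mul_catalan_eq_centralBinom n
    have hne : ((n:ℤ) + 1) ≠ 0 := by positivity
    apply mul_left_cancel₀ hne
    have h1' := congrArg (fun m : ℕ => (m : ℤ)) h1
    have h2' := congrArg (fun m : ℕ => (m : ℤ)) h2
    push_cast at h1' h2' ⊢
    simp only [c, Nat.add_sub_cancel, if_neg (Nat.succ_ne_zero n)]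
    push_cast
    linear_combination 2*(2*(n:ℤ)+1)*h2' - h1'

lemma lemD (p : ℕ) [hF : Fact p.Prime] (h : ℕ) (h2 : 2*h + 1 = p) :
    ∀ k, k ≤ h → ((Nat.centralBinom k : ℕ) : ZMod p) = (-4)^k * (h.choose k) := by
  intro k
  induction k with
  | zero => simp [Nat.centralBinom]
  | succ k ih =>
    intro hk
    have ihv := ih (by omega)
    have hne : ((k:ZMod p) + 1) ≠ 0 := by
      have : (((k+1:ℕ)) : ZMod p) ≠ 0 := by
        rw [Ne, ZMod.natCast_eq_zero_iff]
        intro hdvd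
        have := Nat.le_of_dvd (by omega) hdvd
        omega
      push_cast at this; exact this
    apply mul_left_cancel₀ hne
    have e1 : (k + 1) * Nat.centralBinom (k + 1) = 2 * (2 * k + 1) * Nat.centralBinom k :=
      Nat.succ_mul_centralBinom_succ k
    have e2 : h.choose (k + 1) * (k + 1) = h.choose k * (h - k) := Nat.choose_succ_right_eq h k
    have e1' := congrArg (fun m : ℕ => (m : ZMod p)) e1
    have e2' := congrArg (fun m : ℕ => (m : ZMod p)) e2
    push_cast at e1' e2'
    rw [Nat.cast_sub (by omega : k ≤ h)] at e2'
    have hh : (2*(h:ZMod p)) = -1 := by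
      have : ((2*h+1 : ℕ) : ZMod p) = ((p:ℕ) : ZMod p) := by rw [h2]
      push_cast at this
      rw [ZMod.natCast_self] at this
      linear_combination this
    rw [ihv] at e1'
    calc ((k:ZMod p)+1) * (Nat.centralBinom (k+1) : ZMod p)
        = 2 * (2*k+1) * ((-4)^k * (h.choose k)) := e1'
      _ = ((k:ZMod p)+1) * ((-4)^(k+1) * (h.choose (k+1))) := by
          have : ((h:ZMod p) - k) * (-4)^(k+1) * (h.choose k) = ((k:ZMod p)+1) * ((-4)^(k+1) * (h.choose (k+1))) := by
            linear_combination ((-4:ZMod p))^(k+1) * e2'.symm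
          rw [← this]
          ring_nf
          linear_combination ((-4:ZMod p))^k * (h.choose k) * 2 * hh
  

lemma lemF (p : ℕ) [hF : Fact p.Prime] (h : ℕ) (h2 : 2*h + 1 = p) :
    ∀ k, k ≤ h → (1 - 2*(k:ZMod p)) * ((h+1).choose k) = (h.choose k) := by
  have hh : (2*(h:ZMod p)) = -1 := by
    have : ((2*h+1 : ℕ) : ZMod p) = ((p:ℕ) : ZMod p) := by rw [h2]
    push_cast at this
    rw [ZMod.natCast_self] at this
    linear_combination this
  intro k
  match k with
  | 0 => simp
  | (j+1) =>
    intro hk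
    have pascal : (h+1).choose (j+1) = h.choose j + h.choose (j+1) := Nat.choose_succ_succ h j
    have e2 : h.choose (j + 1) * (j + 1) = h.choose j * (h - j) := Nat.choose_succ_right_eq h j
    have e2' := congrArg (fun m : ℕ => (m : ZMod p)) e2
    have pascal' := congrArg (fun m : ℕ => (m : ZMod p)) pascal
    push_cast at e2' pascal'
    rw [Nat.cast_sub (by omega : j ≤ h)] at e2'
    rw [pascal']
    push_cast
    -- (1 - 2(j+1)) * (C(h,j) + C(h,j+1)) = C(h,j+1)
    -- using (j+1) C(h,j+1) = (h-j) C(h,j) and 2(h-j) = -1-2j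
    linear_combination (-2:ZMod p) * e2' - (h.choose j : ZMod p) * hh

lemma lemE (p : ℕ) [hF : Fact p.Prime] (hp : 3 < p) (h : ℕ) (h2 : 2*h + 1 = p) :
    ∀ k, k < h → ((c k : ℤ) : ZMod p) = -((-4)^k * ((h+1).choose k)) := by
  intro k hk
  have hne : (2*(k:ZMod p) - 1) ≠ 0 := by
    match k with
    | 0 =>
      simp only [Nat.cast_zero, mul_zero, zero_sub]
      intro hcon
      have : (1 : ZMod p) = 0 := by linear_combination -hcon
      exact one_ne_zero this
    | (j+1) =>
      have : (((2*(j+1) - 1 : ℕ)) : ZMod p) ≠ 0 := by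
        rw [Ne, ZMod.natCast_eq_zero_iff]
        intro hdvd
        have := Nat.le_of_dvd (by omega) hdvd
        omega
      intro hcon
      apply this
      rw [Nat.cast_sub (by omega)]
      push_cast at hcon ⊢
      linear_combination hcon
  apply mul_left_cancel₀ hne
  have hc := congrArg (fun z : ℤ => ((z : ℤ) : ZMod p)) (lemC k)
  push_cast at hc
  rw [hc, lemD p h h2 k (by omega)]
  have hf := lemF p h h2 k (by omega)
  linear_combination (-((-4:ZMod p))^k) * hf

theorem stmt_8 (p : ℕ) [Fact p.Prime] (hp : 3 < p) :
    W (p - 2) ≡ 7 * legendreSym p (-3) - 8 * legendreSym p (-1) [ZMOD (p : ℤ)] := by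
  have hF : Fact p.Prime := inferInstance
  suffices hsuff : ((W (p-2) : ℤ) : ZMod p) = ((7 * legendreSym p (-3) - 8 * legendreSym p (-1) : ℤ) : ZMod p) from
    (ZMod.intCast_eq_intCast_iff' _ _ _).mp hsuff
  have hodd : p % 2 = 1 := Nat.odd_iff.1 (hF.out.odd_of_ne_two (by omega))
  set h := p / 2 with hhdef
  have h2 : 2*h + 1 = p := by omega
  have hrange : (p-2)/2 + 1 = h := by omega
  -- basic facts
  have hhm1 : (2:ZMod p)*(h:ZMod p) = -1 := by
    have : ((2*h+1 : ℕ) : ZMod p) = ((p:ℕ) : ZMod p) := by rw [h2]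
    push_cast at this
    rw [ZMod.natCast_self] at this
    linear_combination this
  set a : ZMod p := ((legendreSym p (-3) : ℤ) : ZMod p) with hadef
  set b : ZMod p := ((legendreSym p (-1) : ℤ) : ZMod p) with hbdef
  have ha : ((-3 : ZMod p))^h = a := by
    rw [hadef]
    have := legendreSym.eq_pow p (-3)
    push_cast at this ⊢
    rw [this]
  have hb : ((-1 : ZMod p))^h = b := by
    rw [hbdef]
    have := legendreSym.eq_pow p (-1)
    push_cast at this ⊢
    rw [this]
  have h2ne : (2 : ZMod p) ≠ 0 := by
    have : (((2:ℕ)) : ZMod p) ≠ 0 := by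
      rw [Ne, ZMod.natCast_eq_zero_iff]
      intro hdvd; have := Nat.le_of_dvd (by omega) hdvd; omega
    push_cast at this; exact this
  have h4 : ((4 : ZMod p))^h = 1 := by
    have : ((2 : ZMod p))^(p-1) = 1 := ZMod.pow_card_sub_one_eq_one h2ne
    calc ((4:ZMod p))^h = ((2:ZMod p)^2)^h := by norm_num
      _ = (2:ZMod p)^(2*h) := by rw [← pow_mul, mul_comm]
      _ = (2:ZMod p)^(p-1) := by congr 1; omega
      _ = 1 := this
  have hb4 : ((-4 : ZMod p))^h = b := by
    have : (-4 : ZMod p) = (-1) * 4 := by ring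
    rw [this, mul_pow, hb, h4, mul_one]
  -- the sum
  have hW : ((W (p-2) : ℤ) : ZMod p)
      = ∑ k ∈ range h, ((((p-2).choose (2*k) : ℕ)) : ZMod p) * ((c k : ℤ) : ZMod p) := by
    rw [W, hrange]
    push_cast
    rfl
  rw [hW]
  have hsummand : ∀ k ∈ range h,
      ((((p-2).choose (2*k) : ℕ)) : ZMod p) * ((c k : ℤ) : ZMod p)
      = (-4)^k * (h.choose k) - 2 * ((-4)^k * ((h+1).choose k)) := by
    intro k hk
    rw [mem_range] at hk
    have hB := lemB p (by omega) (2*k) (by omega)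
    have hE := lemE p hp h h2 k hk
    have hCD : (2*(k:ZMod p) - 1) * ((c k : ℤ) : ZMod p) = (-4)^k * (h.choose k) := by
      have hc := congrArg (fun z : ℤ => ((z : ℤ) : ZMod p)) (lemC k)
      push_cast at hc
      rw [hc]
      exact lemD p h h2 k (by omega)
    have hBval : ((((p-2).choose (2*k) : ℕ)) : ZMod p) = 2*(k:ZMod p) + 1 := by
      rw [hB]
      push_cast
      rw [pow_mul]
      norm_num
    rw [hBval]
    calc (2*(k:ZMod p) + 1) * ((c k : ℤ) : ZMod p)
        = (2*(k:ZMod p) - 1) * ((c k : ℤ) : ZMod p) + 2 * ((c k : ℤ) : ZMod p) := by ring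
      _ = (-4)^k * (h.choose k) - 2 * ((-4)^k * ((h+1).choose k)) := by
          rw [hCD, hE]; ring
  rw [sum_congr rfl hsummand, sum_sub_distrib]
  -- binomial sums
  have bin1 : ∑ k ∈ range (h+1), ((-4 : ZMod p))^k * (h.choose k) = (-3)^h := by
    have := add_pow (-4 : ZMod p) 1 h
    simp only [one_pow, mul_one] at this
    rw [← this]; norm_num
  have bin2 : ∑ k ∈ range (h+2), ((-4 : ZMod p))^k * ((h+1).choose k) = (-3)^(h+1) := by
    have := add_pow (-4 : ZMod p) 1 (h+1)
    simp only [one_pow, mul_one] at this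
    rw [← this]; norm_num
  have s1 : ∑ k ∈ range h, ((-4 : ZMod p))^k * (h.choose k) = (-3)^h - (-4)^h := by
    have t := sum_range_succ (fun k => ((-4 : ZMod p))^k * (h.choose k)) h
    simp only [Nat.choose_self, Nat.cast_one, mul_one] at t
    rw [bin1] at t
    linear_combination -t
  have s2 : ∑ k ∈ range h, ((-4 : ZMod p))^k * ((h+1).choose k)
      = (-3)^(h+1) - (-4)^(h+1) - (-4)^h * ((h:ZMod p)+1) := by
    have t1 := sum_range_succ (fun k => ((-4 : ZMod p))^k * ((h+1).choose k)) (h+1)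
    have t2 := sum_range_succ (fun k => ((-4 : ZMod p))^k * ((h+1).choose k)) h
    rw [bin2] at t1
    simp only [Nat.choose_self, Nat.cast_one, mul_one, Nat.choose_succ_self_right] at t1 t2
    push_cast at t1 t2
    linear_combination -t1 - t2
  rw [show (∑ k ∈ range h, (2:ZMod p) * ((-4)^k * ((h+1).choose k)))
      = 2 * ∑ k ∈ range h, ((-4 : ZMod p))^k * ((h+1).choose k) from (mul_sum _ _ _).symm,
    s1, s2]
  -- final computation
  have hgoal : ((7 * legendreSym p (-3) - 8 * legendreSym p (-1) : ℤ) : ZMod p) = 7*a - 8*b := by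
    rw [hadef, hbdef]; push_cast; ring
  rw [hgoal]
  have e3 : ((-3:ZMod p))^(h+1) = -3*a := by rw [pow_succ, ha]; ring
  have e4 : ((-4:ZMod p))^(h+1) = -4*b := by rw [pow_succ, hb4]; ring
  rw [e3, e4, hb4, ha]
  linear_combination b * hhm1
end

section
/- For every integer n ≥ 2, 2·∑_{k=0}^{n-1} (8k+9)·W_k² = 9n(n−1)·W_{n-1}·W_{n-2} − 3n(n−1)·W_{n-2}·W_n + n(n−1)·W_{n-1}·W_n − 3n(n−7)·W_{n-1}². -/
open Finset

lemma catalan_rec (j : ℕ) :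
    ((j:ℤ) + 2) * (catalan (j+1) : ℤ) = 2 * (2*(j:ℤ)+1) * (catalan j : ℤ) := by
  have h1 : ((j:ℤ) + 2) * (catalan (j+1) : ℤ) = (Nat.centralBinom (j+1) : ℤ) := by
    exact_mod_cast succ_mul_catalan_eq_centralBinom (j+1)
  have h2 : ((j:ℤ) + 1) * (Nat.centralBinom (j+1) : ℤ)
      = 2 * (2*(j:ℤ)+1) * (Nat.centralBinom j : ℤ) := by
    exact_mod_cast Nat.succ_mul_centralBinom_succ j
  have h3 : ((j:ℤ) + 1) * (catalan j : ℤ) = (Nat.centralBinom j : ℤ) := by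
    exact_mod_cast succ_mul_catalan_eq_centralBinom j
  have hj : ((j:ℤ) + 1) ≠ 0 := by positivity
  apply mul_left_cancel₀ hj
  linear_combination ((j:ℤ)+1) * h1 + h2 - 2*(2*(j:ℤ)+1) * h3

lemma c_rec (k : ℕ) : ((k:ℤ)+1) * c (k+1) = 2*(2*(k:ℤ)-1) * c k := by
  rcases k with _ | j
  · norm_num [c, catalan_zero]
  · simp only [c, Nat.succ_ne_zero, if_false, Nat.succ_sub_one]
    push_cast
    linear_combination 2 * (catalan_rec j)

lemma choose_pred (n m : ℕ) (h1 : 1 ≤ n) (h : m ≤ n) :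
    (n:ℤ) * ((n-1).choose m : ℤ) = (n.choose m : ℤ) * ((n:ℤ) - m) := by
  have e := Nat.choose_mul_succ_eq (n-1) m
  rw [Nat.sub_add_cancel h1] at e
  zify [h] at e
  linarith

lemma choose_pred2 (n m : ℕ) (h2 : 2 ≤ n) (h : m ≤ n) :
    (n:ℤ)*((n:ℤ)-1) * ((n-2).choose m : ℤ)
      = (n.choose m : ℤ) * (((n:ℤ)-m) * ((n:ℤ)-m-1)) := by
  rcases le_or_gt m (n-1) with hm | hm
  · have e1 := choose_pred n m (by omega) h
    have e2 := choose_pred (n-1) m (by omega) hm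
    rw [show n-1-1 = n-2 from by omega] at e2
    rw [Nat.cast_sub (by omega : 1 ≤ n)] at e2
    push_cast at e2
    linear_combination (n:ℤ) * e2 + ((n:ℤ)-1-(m:ℤ)) * e1
  · have hm' : m = n := by omega
    subst hm'
    have hz : (m-2).choose m = 0 := Nat.choose_eq_zero_of_lt (by omega)
    rw [hz]
    push_cast
    ring
lemma choose_pred3 (n m : ℕ) (h3 : 3 ≤ n) (h : m ≤ n) :
    (n:ℤ)*((n:ℤ)-1)*((n:ℤ)-2) * ((n-3).choose m : ℤ)
      = (n.choose m : ℤ) * (((n:ℤ)-m) * (((n:ℤ)-m-1) * ((n:ℤ)-m-2))) := by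
  rcases le_or_gt m (n-1) with hm | hm
  · have e1 := choose_pred n m (by omega) h
    have e2 := choose_pred2 (n-1) m (by omega) hm
    rw [show n-1-2 = n-3 from by omega] at e2
    rw [Nat.cast_sub (by omega : 1 ≤ n)] at e2
    push_cast at e2
    linear_combination (n:ℤ) * e2 + ((n:ℤ)-1-(m:ℤ)) * ((n:ℤ)-2-(m:ℤ)) * e1
  · have hm' : m = n := by omega
    subst hm'
    have hz : (m-3).choose m = 0 := Nat.choose_eq_zero_of_lt (by omega)
    rw [hz]
    push_cast
    ring

lemma choose_two_step (n j : ℕ) (h : 2*j+2 ≤ n) :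
    (n.choose (2*j+2) : ℤ) * ((2*(j:ℤ)+2)*(2*(j:ℤ)+1))
      = (n.choose (2*j) : ℤ) * (((n:ℤ)-2*j-1)*((n:ℤ)-2*j)) := by
  have e1 := Nat.choose_succ_right_eq n (2*j+1)
  have e2 := Nat.choose_succ_right_eq n (2*j)
  zify [show 2*j+1 ≤ n by omega, show 2*j ≤ n by omega] at e1 e2
  linear_combination (2*(j:ℤ)+1) * e1 + ((n:ℤ)-2*(j:ℤ)-1) * e2

/-- Zeilberger certificate term. -/
def gW (n j : ℕ) : ℤ :=
  2*((n:ℤ)-2)*((j:ℤ)+1)*((n:ℤ)-1-2*(j:ℤ))*((n:ℤ)-2*(j:ℤ)) * (n.choose (2*j) : ℤ) * c (j+1)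

lemma per_term (n j : ℕ) (hn : 3 ≤ n) (hj : 2*j+2 ≤ n) :
    ((n:ℤ)*((n:ℤ)-1)*((n:ℤ)-2)) *
      (((n:ℤ)*(n.choose (2*j+2) : ℤ) - (3*(n:ℤ)-2)*((n-1).choose (2*j+2) : ℤ)
        - ((n:ℤ)-8)*((n-2).choose (2*j+2) : ℤ) + 3*((n:ℤ)-2)*((n-3).choose (2*j+2) : ℤ))
        * c (j+1))
      = gW n j - gW n (j+1) := by
  have hA := choose_pred n (2*j+2) (by omega) hj
  have hB := choose_pred2 n (2*j+2) (by omega) hj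
  have hC := choose_pred3 n (2*j+2) (by omega) hj
  have hD := choose_two_step n j hj
  have hE := c_rec (j+1)
  unfold gW
  simp only [show 2*(j+1) = 2*j+2 from by ring]
  push_cast at *
  linear_combination
    (-((n:ℤ)-1)*((n:ℤ)-2)*(3*(n:ℤ)-2)*c (j+1)) * hA
    + (-((n:ℤ)-2)*((n:ℤ)-8)*c (j+1)) * hB
    + (3*((n:ℤ)-2)*c (j+1)) * hC
    + (2*((n:ℤ)-2)*((j:ℤ)+1)*c (j+1)) * hD
    + (2*((n:ℤ)-2)*((n:ℤ)-3-2*(j:ℤ))*((n:ℤ)-2-2*(j:ℤ))*(n.choose (2*j+2) : ℤ)) * hE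

lemma W_eq_sum (m N : ℕ) (h : m/2 + 1 ≤ N) :
    W m = ∑ k ∈ Finset.range N, (m.choose (2*k) : ℤ) * c k := by
  rw [W]
  apply Finset.sum_subset (Finset.range_subset_range.2 h)
  intro k _ hk
  rw [Finset.mem_range, not_lt] at hk
  have : m < 2*k := by omega
  simp [Nat.choose_eq_zero_of_lt this]

lemma W_rec (n : ℕ) (hn : 3 ≤ n) :
    (n:ℤ) * W n = (3*(n:ℤ)-2) * W (n-1) + ((n:ℤ)-8) * W (n-2) - 3*((n:ℤ)-2) * W (n-3) := by
  have hpos : (0:ℤ) < (n:ℤ)*((n:ℤ)-1)*((n:ℤ)-2) := by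
    have h3 : (3:ℤ) ≤ (n:ℤ) := by exact_mod_cast hn
    have p1 : (0:ℤ) < (n:ℤ) := by linarith
    have p2 : (0:ℤ) < (n:ℤ)-1 := by linarith
    have p3 : (0:ℤ) < (n:ℤ)-2 := by linarith
    exact mul_pos (mul_pos p1 p2) p3
  have key : ∑ k ∈ Finset.range (n/2+1),
      (((n:ℤ)*((n:ℤ)-1)*((n:ℤ)-2)) *
        (((n:ℤ)*(n.choose (2*k) : ℤ) - (3*(n:ℤ)-2)*((n-1).choose (2*k) : ℤ)
          - ((n:ℤ)-8)*((n-2).choose (2*k) : ℤ) + 3*((n:ℤ)-2)*((n-3).choose (2*k) : ℤ))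
          * c k)) = 0 := by
    rw [Finset.sum_range_succ']
    have hterm : ∀ j ∈ Finset.range (n/2),
        (((n:ℤ)*((n:ℤ)-1)*((n:ℤ)-2)) *
          (((n:ℤ)*(n.choose (2*(j+1)) : ℤ) - (3*(n:ℤ)-2)*((n-1).choose (2*(j+1)) : ℤ)
            - ((n:ℤ)-8)*((n-2).choose (2*(j+1)) : ℤ)
            + 3*((n:ℤ)-2)*((n-3).choose (2*(j+1)) : ℤ)) * c (j+1)))
          = gW n j - gW n (j+1) := by
      intro j hj
      rw [Finset.mem_range] at hj
      have hj' : 2*j+2 ≤ n := by omega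
      rw [show 2*(j+1) = 2*j+2 from by ring]
      exact per_term n j hn hj'
    rw [Finset.sum_congr rfl hterm, Finset.sum_range_sub']
    have g0 : gW n 0 = 4*(n:ℤ)*((n:ℤ)-1)*((n:ℤ)-2) := by
      simp [gW, c, catalan_zero]
      ring
    have gt0 : gW n (n/2) = 0 := by
      rcases Nat.even_or_odd n with he | ho
      · have hz : ((n:ℤ) - 2*((n/2 : ℕ):ℤ)) = 0 := by
          have h2 : 2*(n/2) = n := by obtain ⟨t, ht⟩ := he; omega
          have : (2:ℤ)*((n/2 : ℕ):ℤ) = (n:ℤ) := by exact_mod_cast h2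
          linarith
        unfold gW
        rw [hz]
        ring
      · have hz : ((n:ℤ) - 1 - 2*((n/2 : ℕ):ℤ)) = 0 := by
          have h2 : 2*(n/2) + 1 = n := by obtain ⟨t, ht⟩ := ho; omega
          have : (2:ℤ)*((n/2 : ℕ):ℤ) + 1 = (n:ℤ) := by exact_mod_cast h2
          linarith
        unfold gW
        rw [hz]
        ring
    rw [g0, gt0]
    simp [c]
    ring
  have e0 := W_eq_sum n (n/2+1) le_rfl
  have e1 := W_eq_sum (n-1) (n/2+1) (by omega)
  have e2 := W_eq_sum (n-2) (n/2+1) (by omega)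
  have e3 := W_eq_sum (n-3) (n/2+1) (by omega)
  have main : (n:ℤ)*((n:ℤ)-1)*((n:ℤ)-2) *
      ((n:ℤ)*W n - ((3*(n:ℤ)-2)*W (n-1) + ((n:ℤ)-8)*W (n-2) - 3*((n:ℤ)-2)*W (n-3))) = 0 := by
    rw [e0, e1, e2, e3]
    simp only [Finset.mul_sum, ← Finset.sum_sub_distrib, ← Finset.sum_add_distrib]
    refine Eq.trans ?_ key
    apply Finset.sum_congr rfl
    intro k _
    ring
  have h2 := (mul_eq_zero.mp main).resolve_left (ne_of_gt hpos)
  linarith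

theorem stmt_10 (n : ℕ) (hn : 2 ≤ n) :
    2 * (∑ k ∈ Finset.range n, (8 * (k : ℤ) + 9) * (W k) ^ 2) =
      9 * (n : ℤ) * ((n : ℤ) - 1) * W (n - 1) * W (n - 2)
        - 3 * (n : ℤ) * ((n : ℤ) - 1) * W (n - 2) * W n
        + (n : ℤ) * ((n : ℤ) - 1) * W (n - 1) * W n
        - 3 * (n : ℤ) * ((n : ℤ) - 7) * (W (n - 1)) ^ 2 := by
  induction n, hn using Nat.le_induction with
  | base =>
    have w0 : W 0 = -1 := by simp [W, c]
    have w1 : W 1 = -1 := by simp [W, c]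
    have w2 : W 2 = 1 := by
      norm_num [W, c, Finset.sum_range_succ, catalan_zero]
    norm_num [Finset.sum_range_succ, w0, w1, w2]
  | succ n hn ih =>
    have h := W_rec (n+1) (by omega)
    rw [show n+1-1 = n from rfl, show n+1-2 = n-1 from by omega,
        show n+1-3 = n-2 from by omega] at h
    push_cast at h
    rw [Finset.sum_range_succ]
    rw [show n+1-1 = n from rfl, show n+1-2 = n-1 from by omega]
    push_cast
    linear_combination ih - ((n:ℤ)*W n - 3*(n:ℤ)*W (n-1)) * h
end

section
/- For every prime p > 3, ∑_{k=0}^{(p-1)/2} C(2k,k)/(2k−1) ≡ 3·(p|3) − 4·(−1)^{(p−1)/2} (mod p), where (p|3) denotes the Legendre symbol and each summand C(2k,k)/(2k−1) is an integer (the k=0 term equals −1, and for k ≥ 1 it equals 2·Catalan(k−1)). -/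
open Finset

lemma factA (j : ℕ) : (2*j).factorial = 2^j * j.factorial * ∏ i ∈ range j, (2*i+1) := by
  induction j with
  | zero => simp
  | succ n ih =>
    have h : 2*(n+1) = (2*n) + 1 + 1 := by ring
    rw [h, Nat.factorial_succ, Nat.factorial_succ, ih, prod_range_succ, Nat.factorial_succ]
    ring

lemma factB {p m : ℕ} [Fact p.Prime] (hm : 2*m + 1 = p) :
    ∀ j ≤ m, (2:ZMod p)^j * (m.descFactorial j : ZMod p)
      = (-1)^j * ∏ i ∈ range j, (2*(i : ZMod p)+1) := by
  intro j hj
  induction j with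
  | zero => simp
  | succ n ih =>
    have hn : n ≤ m := Nat.le_of_succ_le hj
    rw [Nat.descFactorial_succ, prod_range_succ, pow_succ, pow_succ]
    have hcast : ((m - n : ℕ) : ZMod p) = (m : ZMod p) - n := by
      push_cast [Nat.cast_sub hn]; ring
    have h2 : (2 : ZMod p) * ((m - n : ℕ) : ZMod p) = -(2*(n : ZMod p)+1) := by
      rw [hcast]
      have h0 : ((2*m+1 : ℕ) : ZMod p) = 0 := by rw [hm]; exact ZMod.natCast_self p
      push_cast at h0
      linear_combination h0
    push_cast
    linear_combination 2 * ((m - n : ℕ) : ZMod p) * (ih hn)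
      + ((-1:ZMod p)^n * ∏ i ∈ range n, (2*(i : ZMod p)+1)) * h2

lemma centralBinom_cong {p m : ℕ} [Fact p.Prime] (hm : 2*m + 1 = p) {j : ℕ} (hj : j ≤ m) :
    (((2*j).choose j : ℕ) : ZMod p) = (-4)^j * (m.choose j : ZMod p) := by
  have hfac : (j.factorial : ZMod p) ≠ 0 := by
    rw [Ne, ZMod.natCast_eq_zero_iff]
    intro hdvd
    have hle := (Nat.Prime.dvd_factorial (Fact.out)).mp hdvd
    omega
  have hB := factB hm j hj
  have hD : (m.descFactorial j : ZMod p) = (j.factorial : ZMod p) * (m.choose j : ZMod p) := by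
    exact_mod_cast congrArg (Nat.cast : ℕ → ZMod p) (Nat.descFactorial_eq_factorial_mul_choose m j)
  rw [hD] at hB
  have hA : (((2*j).factorial : ℕ) : ZMod p)
      = 2^j * (j.factorial : ZMod p) * ∏ i ∈ range j, (2*(i : ZMod p)+1) := by
    rw [factA]; push_cast; ring
  have hC : ((2*j).choose j : ZMod p) * (j.factorial : ZMod p) * (j.factorial : ZMod p)
      = ((2*j).factorial : ZMod p) := by
    have h := Nat.choose_mul_factorial_mul_factorial (Nat.le_mul_of_pos_left j (by norm_num) : j ≤ 2*j)
    have h2j : 2*j - j = j := by omega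
    rw [h2j] at h
    exact_mod_cast congrArg (Nat.cast : ℕ → ZMod p) h
  have ha : ((-1:ZMod p))^j * ((-1:ZMod p))^j = 1 := by
    rw [← pow_add, ← two_mul, pow_mul]; norm_num
  have h4 : ((-4:ZMod p))^j = (-1)^j * ((2:ZMod p)^j * (2:ZMod p)^j) := by
    rw [← mul_pow, ← mul_pow]; norm_num
  apply mul_right_cancel₀ hfac
  apply mul_right_cancel₀ hfac
  rw [hC, hA, h4]
  linear_combination (-((-1:ZMod p)^j * (2:ZMod p)^j * (j.factorial : ZMod p))) * hB
    - ((2:ZMod p)^j * (j.factorial : ZMod p) * ∏ i ∈ range j, (2*(i : ZMod p)+1)) * ha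

lemma catalan_cong {p m : ℕ} [Fact p.Prime] (hm : 2*m + 1 = p) {j : ℕ} (hj : j < m) :
    ((m : ZMod p)+1) * (catalan j : ZMod p) = (-4)^j * (((m+1).choose (j+1) : ℕ) : ZMod p) := by
  have hj1 : ((j+1 : ℕ) : ZMod p) ≠ 0 := by
    rw [Ne, ZMod.natCast_eq_zero_iff]
    intro hdvd
    have := Nat.le_of_dvd (by omega) hdvd
    omega
  have h1 : ((j:ZMod p)+1) * (catalan j : ZMod p) = (-4)^j * (m.choose j : ZMod p) := by
    have h := succ_mul_catalan_eq_centralBinom j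
    rw [Nat.centralBinom_eq_two_mul_choose] at h
    have hc : (((j+1) * catalan j : ℕ) : ZMod p) = (((2*j).choose j : ℕ) : ZMod p) := by
      exact_mod_cast congrArg (Nat.cast : ℕ → ZMod p) h
    rw [centralBinom_cong hm (le_of_lt hj)] at hc
    push_cast at hc
    linear_combination hc
  have h2 : ((m:ZMod p)+1) * (m.choose j : ZMod p)
      = (((m+1).choose (j+1) : ℕ) : ZMod p) * ((j:ZMod p)+1) := by
    have h := Nat.add_one_mul_choose_eq m j
    have hc := congrArg (Nat.cast : ℕ → ZMod p) h
    push_cast at hc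
    linear_combination hc
  apply mul_left_cancel₀ (by push_cast at hj1 ⊢; exact hj1 : ((j:ZMod p)+1) ≠ 0)
  linear_combination ((m:ZMod p)+1) * h1 + (-4:ZMod p)^j * h2

lemma leg_eq {p : ℕ} [Fact p.Prime] (hp : 3 < p) :
    ((legendreSym 3 p : ℤ) : ZMod p) = (-3 : ZMod p)^(p/2) := by
  have hp2 : p ≠ 2 := by omega
  have hp3 : (3:ℕ) ≠ p := by omega
  have hodd : p % 2 = 1 := (Nat.Prime.eq_two_or_odd (Fact.out)).resolve_left hp2
  have h3ne0 : ((3:ℤ) : ZMod p) ≠ 0 := by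
    rw [Ne, show ((3:ℤ) : ZMod p) = ((3:ℕ) : ZMod p) by push_cast; ring,
      ZMod.natCast_eq_zero_iff]
    intro hdvd
    have := Nat.le_of_dvd (by norm_num) hdvd
    omega
  have h3ne : legendreSym p 3 ≠ 0 := fun h => h3ne0 ((legendreSym.eq_zero_iff p 3).mp h)
  have hqr := legendreSym.quadratic_reciprocity (p := p) (q := 3) hp2 (by norm_num) hp3.symm
  norm_num at hqr
  have hneg1 : legendreSym p (-1) = (-1)^(p/2) := by
    rw [legendreSym.at_neg_one hp2, ZMod.χ₄_eq_neg_one_pow hodd]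
  have hmul : legendreSym p (-3) = legendreSym p (-1) * legendreSym p 3 := by
    rw [show (-3:ℤ) = -1 * 3 by norm_num, legendreSym.mul]
  have hsq : legendreSym p 3 * legendreSym p 3 = 1 := by
    have := legendreSym.sq_one p (a := 3) h3ne0
    rwa [sq] at this
  have key : legendreSym 3 p = legendreSym p (-3) := by
    apply mul_right_cancel₀ h3ne
    rw [hqr, hmul, hneg1, mul_assoc, hsq, mul_one]
  rw [key, legendreSym.eq_pow]
  push_cast
  ring

theorem stmt_11 (p : ℕ) [Fact p.Prime] (hp : 3 < p) :
    (∑ k ∈ Finset.range ((p - 1) / 2 + 1), c k) ≡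
      3 * legendreSym 3 p - 4 * (-1 : ℤ) ^ ((p - 1) / 2) [ZMOD (p : ℤ)] := by
  have hodd : p % 2 = 1 := (Nat.Prime.eq_two_or_odd (Fact.out)).resolve_left (by omega)
  set m := (p - 1) / 2 with hmdef
  have hm : 2*m + 1 = p := by omega
  have hm2 : 2 ≤ m := by omega
  have hsum : (∑ k ∈ Finset.range (m + 1), c k)
      = (∑ j ∈ Finset.range m, 2 * (catalan j : ℤ)) + (-1) := by
    rw [Finset.sum_range_succ']
    simp [c]
  rw [← ZMod.intCast_eq_intCast_iff, hsum]
  push_cast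
  -- abbreviations
  set K := ZMod p
  set A : K := ∑ j ∈ Finset.range m, (catalan j : K) with hAdef
  set B : K := ∑ j ∈ Finset.range m, (-4:K)^j * (((m+1).choose (j+1) : ℕ) : K) with hBdef
  have hsumA : (∑ j ∈ Finset.range m, 2 * (catalan j : K)) = 2 * A := by
    rw [hAdef, Finset.mul_sum]
  have hA : ((m : K)+1) * A = B := by
    rw [hAdef, hBdef, Finset.mul_sum]
    exact Finset.sum_congr rfl fun j hj => catalan_cong hm (Finset.mem_range.mp hj)
  have h2m : (2:K) * ((m:K)+1) = 1 := by
    have h0 : ((2*m+1 : ℕ) : ZMod p) = 0 := by rw [hm]; exact ZMod.natCast_self p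
    push_cast at h0
    linear_combination h0
  have h2ne : (2:K) ≠ 0 := by
    rw [show (2:K) = ((2:ℕ) : K) by push_cast; ring, Ne, ZMod.natCast_eq_zero_iff]
    intro hdvd
    have := Nat.le_of_dvd (by norm_num) hdvd
    omega
  have h4p : (-4:K)^(m+1) = 4*(-1:K)^(m+1) := by
    have hferma : (2:K)^(2*m) = 1 := by
      have := ZMod.pow_card_sub_one_eq_one h2ne
      rwa [show p - 1 = 2*m by omega] at this
    have h1 : (-4:K)^(m+1) = (-1)^(m+1) * (2:K)^(2*(m+1)) := by
      rw [show (-4:K) = -1 * 2^2 by norm_num, mul_pow, ← pow_mul]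
    rw [h1, show 2*(m+1) = 2*m + 2 by ring, pow_add (2:K) (2*m) 2, hferma]
    ring
  have hbin : (-3:K)^(m+1)
      = ∑ k ∈ Finset.range (m+2), (-4:K)^k * (((m+1).choose k : ℕ) : K) := by
    have h := add_pow (-4 : K) 1 (m+1)
    norm_num at h
    exact h
  have hbin2 : (-3:K)^(m+1) = (-4)*B + (-4:K)^(m+1) + 1 := by
    rw [hbin, Finset.sum_range_succ, Finset.sum_range_succ']
    simp only [Nat.choose_self, Nat.choose_zero_right, Nat.cast_one, pow_zero, mul_one, one_mul]
    have : (∑ j ∈ Finset.range m, (-4:K)^(j+1) * (((m+1).choose (j+1) : ℕ) : K)) = (-4)*B := by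
      rw [hBdef, Finset.mul_sum]
      exact Finset.sum_congr rfl fun j hj => by ring
    rw [this]
    ring
  rw [h4p] at hbin2
  rw [pow_succ, pow_succ] at hbin2
  have hL : ((legendreSym 3 p : ℤ) : K) = (-3:K)^m := by
    have := leg_eq (p := p) hp
    rwa [show p/2 = m by omega] at this
  rw [hsumA]
  linear_combination 4*hA - 2*A*h2m + hbin2 - 3*hL
end

section
/- For every integer n ≥ 1, 24·∑_{k=0}^{n-1} k(k+1)(8k+9)·T_k·T_{k+1} = −n²(2n−5)²·T_n² + 6n²(4n²+20n−21)·T_{n-1}·T_n − 9n²(2n−3)²·T_{n-1}². -/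
open Finset

open Polynomial in
/-- The trinomial `1 + X + X^2` over `ℤ`. -/
noncomputable def Pt : Polynomial ℤ := 1 + X + X ^ 2

namespace TrinAux
open Polynomial

lemma reflect_Pt : Pt.reflect 2 = Pt := by
  have h : Pt = X ^ 0 + X ^ 1 + X ^ 2 := by unfold Pt; ring
  rw [h, reflect_add, reflect_add, reflect_monomial, reflect_monomial, reflect_monomial,
    revAt_le (by norm_num), revAt_le (by norm_num), revAt_le (by norm_num)]
  ring

lemma Pt_natDegree_le : Pt.natDegree ≤ 2 := by
  unfold Pt
  compute_degree

lemma reflect_Pt_pow (n : ℕ) : (Pt ^ n).reflect (2 * n) = Pt ^ n := by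
  induction n with
  | zero =>
      have h : (Pt ^ 0 : ℤ[X]) = X ^ 0 := by simp
      rw [h, Nat.mul_zero, reflect_monomial]
      norm_num [revAt_le]
  | succ k ih =>
      have hdeg : (Pt ^ k).natDegree ≤ 2 * k :=
        le_trans natDegree_pow_le (by nlinarith [Pt_natDegree_le])
      have h2 : 2 * (k + 1) = 2 * k + 2 := by ring
      rw [pow_succ, h2, reflect_mul _ _ hdeg Pt_natDegree_le, ih, reflect_Pt]

lemma coeff_symm {n k : ℕ} (hk : k ≤ 2 * n) :
    (Pt ^ n).coeff k = (Pt ^ n).coeff (2 * n - k) := by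
  conv_lhs => rw [← reflect_Pt_pow n]
  rw [coeff_reflect, revAt_le hk]

lemma choose_id (n l : ℕ) : n.choose (2 * l) * (2 * l).choose l = n.choose l * ((n - l).choose l) := by
  rcases le_or_gt (2 * l) n with h | h
  · have h2 : 2 * l - l = l := by omega
    rw [Nat.choose_mul (k := 2 * l) (s := l) (by omega), h2]
  · rw [Nat.choose_eq_zero_of_lt h]
    rcases le_or_gt l n with h2 | h2
    · rw [Nat.choose_eq_zero_of_lt (by omega : n - l < l)]
      ring
    · rw [Nat.choose_eq_zero_of_lt h2]
      ring

lemma T_eq_sum (n : ℕ) :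
    T n = ∑ l ∈ Finset.range (n + 1), (n.choose l : ℤ) * ((n - l).choose l : ℤ) := by
  unfold T
  rw [Finset.sum_subset (Finset.range_subset_range.mpr (by omega : n / 2 + 1 ≤ n + 1))]
  · refine Finset.sum_congr rfl fun l _ => ?_
    exact_mod_cast congrArg (fun x : ℕ => (x : ℤ)) (choose_id n l)
  · intro l hl hl2
    simp only [Finset.mem_range] at hl hl2
    have : n < 2 * l := by omega
    rw [Nat.choose_eq_zero_of_lt this]
    push_cast
    ring

lemma coeff_Pt_pow_self (n : ℕ) : (Pt ^ n).coeff n = T n := by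
  have hPt : Pt = (X + X ^ 2) + 1 := by unfold Pt; ring
  rw [hPt, add_pow]
  rw [finset_sum_coeff]
  have hterm : ∀ m ∈ Finset.range (n + 1),
      ((X + X ^ 2 : ℤ[X]) ^ m * 1 ^ (n - m) * (n.choose m : ℤ[X])).coeff n
        = (m.choose (n - m) : ℤ) * (n.choose m : ℤ) := by
    intro m hm
    simp only [Finset.mem_range] at hm
    have hm' : m ≤ n := by omega
    have hxx : (X + X ^ 2 : ℤ[X]) = X ^ 1 * (1 + X) := by ring
    rw [hxx, mul_pow, one_pow, mul_one, ← pow_mul, one_mul, ← C_eq_natCast, coeff_mul_C,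
      coeff_X_pow_mul', if_pos hm', coeff_one_add_X_pow]
  rw [Finset.sum_congr rfl hterm, T_eq_sum, ← Finset.sum_range_reflect]
  refine Finset.sum_congr rfl fun l hl => ?_
  simp only [Finset.mem_range] at hl
  have hl' : l ≤ n := by omega
  have h1 : n + 1 - 1 - l = n - l := by omega
  have h2 : n - (n - l) = l := by omega
  rw [h1, h2, Nat.choose_symm hl']
  ring

/-- `B n` is the coefficient of `X^(n+1)` in `Pt^n`. -/
noncomputable def B (n : ℕ) : ℤ := (Pt ^ n).coeff (n + 1)

lemma hTB (n : ℕ) : T (n + 1) = T n + 2 * B n := by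
  cases n with
  | zero =>
      have hB0 : B 0 = 0 := by simp [B, coeff_one]
      rw [hB0]
      simp [T, Finset.sum_range_succ]
  | succ k =>
      have key : T (k + 2) = (Pt ^ (k + 2)).coeff (k + 2) := (coeff_Pt_pow_self _).symm
      have hmul : (Pt ^ (k + 2) : ℤ[X]) = Pt ^ (k + 1) + X * Pt ^ (k + 1) + X ^ 2 * Pt ^ (k + 1) := by
        rw [pow_succ']
        unfold Pt
        ring
      rw [hmul] at key
      have e2 : ((X : ℤ[X]) ^ 2 * Pt ^ (k + 1)).coeff (k + 2) = (Pt ^ (k + 1)).coeff k := by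
        have : k + 2 = k + 2 := rfl
        exact coeff_X_pow_mul _ 2 k
      have esym : (Pt ^ (k + 1)).coeff k = (Pt ^ (k + 1)).coeff (k + 2) := by
        have := coeff_symm (n := k + 1) (k := k) (by omega)
        have h : 2 * (k + 1) - k = k + 2 := by omega
        rwa [h] at this
      rw [coeff_add, coeff_add, e2, esym] at key
      have e1 : ((X : ℤ[X]) * Pt ^ (k + 1)).coeff (k + 2) = (Pt ^ (k + 1)).coeff (k + 1) := by
        have := coeff_X_mul (Pt ^ (k + 1)) (k + 1)
        exact this
      rw [e1, coeff_Pt_pow_self] at key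
      show T (k + 2) = T (k + 1) + 2 * B (k + 1)
      rw [key]
      unfold B
      ring

lemma hBrec (n : ℕ) : ((n : ℤ) + 2) * B (n + 1) = ((n : ℤ) + 1) * (B n + 2 * T n) := by
  have hder : derivative (Pt ^ (n + 1)) = C ((n : ℤ) + 1) * Pt ^ n * derivative Pt := by
    exact_mod_cast derivative_pow_succ Pt n
  have hdPt : derivative Pt = 1 + 2 * X := by
    unfold Pt
    simp
    try ring
  have hc := congrArg (fun p => p.coeff (n + 1)) hder
  rw [coeff_derivative] at hc
  push_cast at hc
  have hrhs : (C ((n : ℤ) + 1) * Pt ^ n * derivative Pt).coeff (n + 1)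
      = ((n : ℤ) + 1) * (B n + 2 * T n) := by
    rw [hdPt]
    have hexp : C ((n : ℤ) + 1) * Pt ^ n * (1 + 2 * X)
        = C ((n : ℤ) + 1) * (Pt ^ n + (Pt ^ n * X + Pt ^ n * X)) := by ring
    rw [hexp, coeff_C_mul, coeff_add, coeff_add, coeff_mul_X, coeff_Pt_pow_self]
    unfold B
    ring
  rw [hrhs] at hc
  rw [← hc]
  unfold B
  ring

lemma hRec (n : ℕ) : ((n : ℤ) + 2) * T (n + 2) = (2 * (n : ℤ) + 3) * T (n + 1) + 3 * ((n : ℤ) + 1) * T n := by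
  have h1 := hTB n
  have h2 := hTB (n + 1)
  have h3 := hBrec n
  push_cast at h2 h3
  linear_combination (-(n : ℤ) - 1) * h1 + ((n : ℤ) + 2) * h2 + 2 * h3

lemma key : ∀ m : ℕ,
    24 * (∑ k ∈ Finset.range (m + 1), (k : ℤ) * ((k : ℤ) + 1) * (8 * (k : ℤ) + 9) * T k * T (k + 1)) =
      -((m : ℤ) + 1) ^ 2 * (2 * ((m : ℤ) + 1) - 5) ^ 2 * (T (m + 1)) ^ 2
        + 6 * ((m : ℤ) + 1) ^ 2 * (4 * ((m : ℤ) + 1) ^ 2 + 20 * ((m : ℤ) + 1) - 21) * T m * T (m + 1)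
        - 9 * ((m : ℤ) + 1) ^ 2 * (2 * ((m : ℤ) + 1) - 3) ^ 2 * (T m) ^ 2 := by
  intro m
  induction m with
  | zero =>
      rw [Finset.sum_range_one]
      norm_num
      decide
  | succ p ih =>
      rw [Finset.sum_range_succ, mul_add, ih]
      have h := hRec p
      push_cast
      linear_combination ((12 * (p : ℤ) ^ 3 - 9 * (p : ℤ) + 3) * T p
        + (-(16 * (p : ℤ) ^ 3 + 68 * (p : ℤ) ^ 2 + 52 * (p : ℤ) + 9)) * T (p + 1)
        + (4 * (p : ℤ) ^ 3 + 4 * (p : ℤ) ^ 2 - 7 * (p : ℤ) + 2) * T (p + 2)) * h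

end TrinAux

theorem stmt_12 (n : ℕ) (hn : 1 ≤ n) :
    24 * (∑ k ∈ Finset.range n, (k : ℤ) * ((k : ℤ) + 1) * (8 * (k : ℤ) + 9) * T k * T (k + 1)) =
      -(n : ℤ) ^ 2 * (2 * (n : ℤ) - 5) ^ 2 * (T n) ^ 2
        + 6 * (n : ℤ) ^ 2 * (4 * (n : ℤ) ^ 2 + 20 * (n : ℤ) - 21) * T (n - 1) * T n
        - 9 * (n : ℤ) ^ 2 * (2 * (n : ℤ) - 3) ^ 2 * (T (n - 1)) ^ 2 := by
  obtain ⟨m, rfl⟩ : ∃ m, n = m + 1 := ⟨n - 1, (Nat.succ_pred_eq_of_pos hn).symm⟩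
  have h := TrinAux.key m
  simp only [Nat.add_sub_cancel]
  push_cast
  linear_combination h
end

section
/- For every integer n ≥ 1, 8·∑_{k=0}^{n-1} (k+1)(16k+21)·T_k·T_{k+1} = −n²(4n−7)·T_n² + 6n(4n²+19n+6)·T_{n-1}·T_n − 9n²(4n−3)·T_{n-1}². -/
open Finset

open Nat

def F (n k : ℕ) : ℤ := (n.choose (2 * k) : ℤ) * ((2 * k).choose k : ℤ)

def G (n k : ℕ) : ℤ := -2 * k * ((n + 1).choose (2 * k - 1) : ℤ) * ((2 * k).choose k : ℤ)

lemma T_eq_s14 (n N : ℕ) (h : n / 2 + 1 ≤ N) : T n = ∑ l ∈ Finset.range N, F n l := by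
  rw [T]
  apply Finset.sum_subset (Finset.range_subset_range.2 h)
  intro x _ hx
  simp only [Finset.mem_range, not_lt] at hx
  have hlt : n < 2 * x := by omega
  simp [F, Nat.choose_eq_zero_of_lt hlt]

set_option maxHeartbeats 2000000 in
lemma key2 (j m : ℕ) :
    ((2*j+m+4 : ℕ) : ℚ) * ((2*j+m+4).choose (2*j+2)) * ((2*j+2).choose (j+1))
      + 2*((j:ℚ)+2) * ((2*j+m+3).choose (2*j+3)) * ((2*j+4).choose (j+2))
    = (2*((2*j+m+2 : ℕ):ℚ)+3) * ((2*j+m+3).choose (2*j+2)) * ((2*j+2).choose (j+1))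
      + 3*((2*j+m+3 : ℕ):ℚ) * ((2*j+m+2).choose (2*j+2)) * ((2*j+2).choose (j+1))
      + 2*((j:ℚ)+1) * ((2*j+m+3).choose (2*j+1)) * ((2*j+2).choose (j+1)) := by
  rw [Nat.cast_choose ℚ (by omega : 2*j+2 ≤ 2*j+m+4),
      Nat.cast_choose ℚ (by omega : j+1 ≤ 2*j+2),
      Nat.cast_choose ℚ (by omega : 2*j+3 ≤ 2*j+m+3),
      Nat.cast_choose ℚ (by omega : j+2 ≤ 2*j+4),
      Nat.cast_choose ℚ (by omega : 2*j+1 ≤ 2*j+m+3),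
      Nat.cast_choose ℚ (by omega : 2*j+2 ≤ 2*j+m+3),
      Nat.cast_choose ℚ (by omega : 2*j+2 ≤ 2*j+m+2)]
  simp only [show 2*j+m+4-(2*j+2) = m+2 from by omega,
    show 2*j+2-(j+1) = j+1 from by omega,
    show 2*j+m+3-(2*j+3) = m from by omega,
    show 2*j+4-(j+2) = j+2 from by omega,
    show 2*j+m+3-(2*j+1) = m+2 from by omega,
    show 2*j+m+3-(2*j+2) = m+1 from by omega,
    show 2*j+m+2-(2*j+2) = m from by omega]
  have hf1 : ((2*j+m+4)! : ℚ) = (2*(j:ℚ)+m+4)*(2*(j:ℚ)+m+3)*((2*j+m+2)! : ℚ) := by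
    rw [show 2*j+m+4 = (2*j+m+3)+1 from by omega, Nat.factorial_succ,
        show 2*j+m+3 = (2*j+m+2)+1 from by omega, Nat.factorial_succ]
    push_cast; ring
  have hf2 : ((2*j+m+3)! : ℚ) = (2*(j:ℚ)+m+3)*((2*j+m+2)! : ℚ) := by
    rw [show 2*j+m+3 = (2*j+m+2)+1 from by omega, Nat.factorial_succ]; push_cast; ring
  have hf3 : ((2*j+4)! : ℚ) = (2*(j:ℚ)+4)*(2*(j:ℚ)+3)*(2*(j:ℚ)+2)*((2*j+1)! : ℚ) := by
    rw [show 2*j+4 = (2*j+3)+1 from by omega, Nat.factorial_succ,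
        show 2*j+3 = (2*j+2)+1 from by omega, Nat.factorial_succ,
        show 2*j+2 = (2*j+1)+1 from by omega, Nat.factorial_succ]
    push_cast; ring
  have hf4 : ((2*j+3)! : ℚ) = (2*(j:ℚ)+3)*(2*(j:ℚ)+2)*((2*j+1)! : ℚ) := by
    rw [show 2*j+3 = (2*j+2)+1 from by omega, Nat.factorial_succ,
        show 2*j+2 = (2*j+1)+1 from by omega, Nat.factorial_succ]
    push_cast; ring
  have hf5 : ((2*j+2)! : ℚ) = (2*(j:ℚ)+2)*((2*j+1)! : ℚ) := by
    rw [show 2*j+2 = (2*j+1)+1 from by omega, Nat.factorial_succ]; push_cast; ring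
  have hf6 : ((j+2)! : ℚ) = ((j:ℚ)+2)*((j+1)! : ℚ) := by
    rw [show j+2 = (j+1)+1 from by omega, Nat.factorial_succ]; push_cast; ring
  have hf7 : ((m+2)! : ℚ) = ((m:ℚ)+2)*((m:ℚ)+1)*((m)! : ℚ) := by
    rw [show m+2 = (m+1)+1 from rfl, Nat.factorial_succ, Nat.factorial_succ]; push_cast; ring
  have hf8 : ((m+1)! : ℚ) = ((m:ℚ)+1)*((m)! : ℚ) := by
    rw [Nat.factorial_succ]; push_cast; ring
  rw [hf1, hf2, hf3, hf4, hf5, hf6, hf7, hf8]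
  have h1 : ((2*j+m+2)! : ℚ) ≠ 0 := Nat.cast_ne_zero.2 (Nat.factorial_ne_zero _)
  have h2 : ((2*j+1)! : ℚ) ≠ 0 := Nat.cast_ne_zero.2 (Nat.factorial_ne_zero _)
  have h3 : ((m)! : ℚ) ≠ 0 := Nat.cast_ne_zero.2 (Nat.factorial_ne_zero _)
  have h4 : (((j+1))! : ℚ) ≠ 0 := Nat.cast_ne_zero.2 (Nat.factorial_ne_zero _)
  push_cast
  field_simp
  ring

lemma key_s14 (n k : ℕ) :
    ((n:ℤ)+2) * F (n+2) k - (2*(n:ℤ)+3) * F (n+1) k - 3*((n:ℤ)+1) * F n k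
      = G n (k+1) - G n k := by
  rcases k with _ | j
  · simp only [F, G, Nat.mul_zero, Nat.choose_zero_right, Nat.choose_self, Nat.cast_one,
      Nat.cast_zero]
    norm_num [Nat.choose_one_right]
    ring
  · rcases lt_or_ge n (2*(j+1)) with h | h
    · rcases Nat.lt_or_ge (n+2) (2*(j+1)) with h2 | h2
      · -- 2k > n+2 : everything vanishes
        have e1 : n+2 < 2*(j+1) := h2
        simp only [F, G]
        rw [Nat.choose_eq_zero_of_lt (by omega : n+2 < 2*(j+1)),
            Nat.choose_eq_zero_of_lt (by omega : n+1 < 2*(j+1)),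
            Nat.choose_eq_zero_of_lt (by omega : n < 2*(j+1)),
            Nat.choose_eq_zero_of_lt (by omega : n+1 < 2*(j+1+1)-1),
            Nat.choose_eq_zero_of_lt (by omega : n+1 < 2*(j+1)-1)]
        push_cast; ring
      · rcases Nat.eq_or_lt_of_le h2 with h3 | h3
        · -- n + 2 = 2k, n = 2j
          obtain rfl : n = 2*j := by omega
          simp only [F, G]
          rw [show 2*j+2 = 2*(j+1) from by omega, Nat.choose_self,
              Nat.choose_eq_zero_of_lt (by omega : 2*j+1 < 2*(j+1)),
              Nat.choose_eq_zero_of_lt (by omega : 2*j < 2*(j+1)),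
              Nat.choose_eq_zero_of_lt (by omega : 2*j+1 < 2*(j+1+1)-1),
              show 2*(j+1)-1 = (2*j+1) from by omega,
              show (2*j+1).choose (2*j+1) = 1 from Nat.choose_self _]
          push_cast; ring
        · -- n + 1 = 2k, n = 2j+1
          obtain rfl : n = 2*j+1 := by omega
          simp only [F, G]
          rw [show 2*j+1+2 = (2*(j+1))+1 from by omega, Nat.choose_succ_self_right,
              show 2*j+1+1 = 2*(j+1) from by omega, Nat.choose_self,
              Nat.choose_eq_zero_of_lt (by omega : 2*j+1 < 2*(j+1)),
              Nat.choose_eq_zero_of_lt (by omega : 2*(j+1) < 2*(j+1+1)-1),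
              show 2*(j+1)-1 = (2*j+1) from by omega,
              show (2*(j+1)).choose (2*j+1) = 2*j+2 from by
                rw [show 2*(j+1) = (2*j+1)+1 from by omega]
                exact Nat.choose_succ_self_right _]
          push_cast; ring
    · -- main case 2k ≤ n
      obtain ⟨m, rfl⟩ : ∃ m, n = 2*j+2+m := ⟨n - (2*j+2), by omega⟩
      simp only [F, G]
      have e1 : 2*j+2+m+2 = 2*j+m+4 := by omega
      have e2 : 2*(j+1) = 2*j+2 := by omega
      have e3 : 2*j+2+m+1 = 2*j+m+3 := by omega
      have e4 : 2*j+2+m = 2*j+m+2 := by omega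
      have e5 : 2*(j+1+1) = 2*j+4 := by omega
      have e6 : 2*(j+1+1)-1 = 2*j+3 := by omega
      have e7 : 2*(j+1)-1 = 2*j+1 := by omega
      rw [e6, e7, e1, e3, e4, e5, e2, show j+1+1 = j+2 from by omega]
      qify
      push_cast
      linear_combination (norm := (push_cast; ring1)) key2 j m

lemma Trec (n : ℕ) :
    ((n:ℤ)+2) * T (n+2) = (2*(n:ℤ)+3) * T (n+1) + 3*((n:ℤ)+1) * T n := by
  set N := n/2 + 2 with hN
  have h1 : ∑ k ∈ Finset.range N,
      (((n:ℤ)+2) * F (n+2) k - (2*(n:ℤ)+3) * F (n+1) k - 3*((n:ℤ)+1) * F n k)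
      = G n N - G n 0 := by
    rw [← Finset.sum_range_sub (G n) N]
    exact Finset.sum_congr rfl fun k _ => key_s14 n k
  have hGN : G n N = 0 := by
    have : n + 1 < 2*N - 1 := by omega
    simp [G, Nat.choose_eq_zero_of_lt this]
  have hG0 : G n 0 = 0 := by simp [G]
  rw [hGN, hG0, sub_zero] at h1
  rw [Finset.sum_sub_distrib, Finset.sum_sub_distrib, ← Finset.mul_sum, ← Finset.mul_sum,
      ← Finset.mul_sum] at h1
  rw [T_eq_s14 (n+2) N (by omega), T_eq_s14 (n+1) N (by omega), T_eq_s14 n N (by omega)]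
  linarith


theorem stmt_14 (n : ℕ) (hn : 1 ≤ n) :
    8 * (∑ k ∈ Finset.range n, ((k : ℤ) + 1) * (16 * (k : ℤ) + 21) * T k * T (k + 1)) =
      -(n : ℤ) ^ 2 * (4 * (n : ℤ) - 7) * (T n) ^ 2
        + 6 * (n : ℤ) * (4 * (n : ℤ) ^ 2 + 19 * (n : ℤ) + 6) * T (n - 1) * T n
        - 9 * (n : ℤ) ^ 2 * (4 * (n : ℤ) - 3) * (T (n - 1)) ^ 2 := by
  induction n, hn using Nat.le_induction with
  | base =>
    have h0 : T 0 = 1 := by decide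
    have h1 : T 1 = 1 := by decide
    norm_num [Finset.sum_range_one, h0, h1]
  | succ n hn ih =>
    have hrec : ((n:ℤ)+1) * T (n+1) = (2*(n:ℤ)+1) * T n + 3*(n:ℤ) * T (n-1) := by
      obtain ⟨m, rfl⟩ : ∃ m, n = m + 1 := ⟨n - 1, by omega⟩
      have := Trec m
      push_cast
      push_cast at this
      linarith
    have hne : (((n:ℤ)+1)^2) ≠ 0 := by positivity
    simp only [Nat.add_sub_cancel]
    push_cast
    refine mul_left_cancel₀ hne ?_
    rw [Finset.sum_range_succ]
    linear_combination
      (((-16:ℤ)*n^4 - 68*n^3 - 97*n^2 - 54*n - 9) * T n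
        + (12*(n:ℤ)^4 + 15*n^3 - 6*n^2 - 9*n) * T (n-1)
        + (4*(n:ℤ)^4 + 9*n^3 + 3*n^2 - 5*n - 3) * T (n+1)) * hrec
      + ((n:ℤ)+1)^2 * ih
end
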